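/- arXiv:1407.6433 — 6 statements merged into one kernel-verified Lean document; each statement's English description precedes it below -/
import Mathlib

section
/- Let τ be a sub-probability measure on ℝ (i.e. τ(ℝ) ≤ 1) that is absolutely continuous with density bounded by A > 0. Then for every E ∈ ℝ and every δ > 0, ∫ (|v - E|² + δ²)^(-1/2) dτ(v) ≤ 3 A log(1 + 1/(A δ)). -/
open MeasureTheory Real
open scoped ENNReal

lemma aux1 {x : ℝ} (hx : 0 < x) (hx2 : x ≤ 2) : x ≤ 3 * Real.log (1 + x) := by
  have h2 : 1 - x / 3 ≤ Real.exp (-(x / 3)) := by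
    have := Real.add_one_le_exp (-(x / 3)); linarith
  have h3 : 0 < 1 - x / 3 := by linarith
  have h4 : Real.exp (x / 3) ≤ (1 - x / 3)⁻¹ := by
    rw [show Real.exp (x / 3) = (Real.exp (-(x / 3)))⁻¹ by rw [Real.exp_neg, inv_inv]]
    exact inv_anti₀ h3 h2
  have h5 : (1 - x / 3)⁻¹ ≤ 1 + x := by
    rw [inv_le_iff_one_le_mul₀ h3]
    nlinarith
  have h6 : Real.exp (x / 3) ≤ 1 + x := h4.trans h5
  have := (Real.le_log_iff_exp_le (by linarith : (0:ℝ) < 1 + x)).2 h6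
  linarith

lemma aux2 {x : ℝ} (hx : 2 < x) : 2 + 2 * Real.log (x / 2) ≤ 3 * Real.log (1 + x) := by
  have hx0 : 0 < x := by linarith
  have he2 : Real.exp 2 < 8 := by
    have h := Real.exp_one_lt_d9
    have h2 : Real.exp 2 = Real.exp 1 * Real.exp 1 := by
      rw [← Real.exp_add]; norm_num
    nlinarith [Real.exp_pos 1]
  have hkey : Real.exp 2 ≤ (1 + x) ^ 3 / (x / 2) ^ 2 := by
    rw [le_div_iff₀ (by positivity)]
    nlinarith
  have hlog : (2:ℝ) ≤ Real.log ((1 + x) ^ 3 / (x / 2) ^ 2) :=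
    (Real.le_log_iff_exp_le (by positivity)).2 hkey
  rw [Real.log_div (by positivity) (by positivity), Real.log_pow, Real.log_pow] at hlog
  push_cast at hlog
  linarith

theorem stmt_0 (τ : Measure ℝ) (A E δ : ℝ) (hA : 0 < A) (hδ : 0 < δ)
    (hτ : τ Set.univ ≤ 1)
    (F : ℝ → ℝ≥0∞) (hF : τ = volume.withDensity F)
    (hFA : ∀ᵐ v ∂(volume : Measure ℝ), F v ≤ ENNReal.ofReal A) :
    ∫⁻ v, ENNReal.ofReal ((|v - E| ^ 2 + δ ^ 2) ^ (-(1 / 2 : ℝ))) ∂τ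
      ≤ ENNReal.ofReal (3 * A * Real.log (1 + 1 / (A * δ))) := by
  set g : ℝ → ℝ := fun v => (|v - E| ^ 2 + δ ^ 2) ^ (-(1 / 2 : ℝ)) with hg
  have hbpos : ∀ v : ℝ, 0 < |v - E| ^ 2 + δ ^ 2 := fun v => by positivity
  have hgc : Continuous g := by
    apply Continuous.rpow_const
    · continuity
    · exact fun v => Or.inl (ne_of_gt (hbpos v))
  have hgnn : ∀ v, 0 ≤ g v := fun v => Real.rpow_nonneg (hbpos v).le _
  rw [lintegral_eq_lintegral_meas_lt τ (Filter.Eventually.of_forall hgnn) hgc.aemeasurable]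
  -- bound on superlevel measures
  have hbound : ∀ t ∈ Set.Ioi (0:ℝ), τ {a | t < g a}
      ≤ (Set.Ioo (0:ℝ) δ⁻¹).indicator (fun t => min 1 (ENNReal.ofReal (2 * A / t))) t := by
    intro t ht
    have ht0 : (0:ℝ) < t := ht
    by_cases htδ : t < δ⁻¹
    · rw [Set.indicator_of_mem (Set.mem_Ioo.2 ⟨ht0, htδ⟩)]
      refine le_min (le_trans (measure_mono (Set.subset_univ _)) hτ) ?_
      have hsub : {a | t < g a} ⊆ Set.Ioo (E - t⁻¹) (E + t⁻¹) := by
        intro a ha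
        have ha' : t < (|a - E| ^ 2 + δ ^ 2) ^ (-(1 / 2 : ℝ)) := ha
        set s := |a - E| ^ 2 + δ ^ 2 with hs
        have hspos : 0 < s := hbpos a
        have hrw : s ^ (-(1 / 2 : ℝ)) = (Real.sqrt s)⁻¹ := by
          rw [Real.rpow_neg hspos.le, Real.sqrt_eq_rpow]
        rw [hrw] at ha'
        have hsq : 0 < Real.sqrt s := Real.sqrt_pos.2 hspos
        have h1 : Real.sqrt s < t⁻¹ := (lt_inv_comm₀ ht0 hsq).1 ha'
        have h2 : s < t⁻¹ ^ 2 := by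
          have := Real.sq_sqrt hspos.le
          nlinarith [Real.sqrt_nonneg s]
        have h3 : |a - E| < t⁻¹ := by
          have h4 : |a - E| ^ 2 < t⁻¹ ^ 2 := by nlinarith [sq_nonneg δ]
          exact lt_of_pow_lt_pow_left₀ 2 (by positivity) h4
        have h5 := abs_lt.1 h3
        exact ⟨by linarith [h5.1], by linarith [h5.2]⟩
      calc τ {a | t < g a} ≤ τ (Set.Ioo (E - t⁻¹) (E + t⁻¹)) := measure_mono hsub
        _ = ∫⁻ v in Set.Ioo (E - t⁻¹) (E + t⁻¹), F v := by
            rw [hF, withDensity_apply _ measurableSet_Ioo]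
        _ ≤ ∫⁻ _ in Set.Ioo (E - t⁻¹) (E + t⁻¹), ENNReal.ofReal A := by
            exact lintegral_mono_ae (ae_restrict_of_ae hFA)
        _ = ENNReal.ofReal A * volume (Set.Ioo (E - t⁻¹) (E + t⁻¹)) := by
            rw [setLIntegral_const]
        _ = ENNReal.ofReal (2 * A / t) := by
            rw [Real.volume_Ioo, ← ENNReal.ofReal_mul hA.le]
            congr 1
            field_simp
            ring
    · rw [Set.indicator_of_notMem (fun h => htδ (Set.mem_Ioo.1 h).2)]
      have hempty : {a | t < g a} = ∅ := by
        ext a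
        simp only [Set.mem_setOf_eq, Set.mem_empty_iff_false, iff_false, not_lt]
        have h1 : g a ≤ (δ ^ 2) ^ (-(1 / 2 : ℝ)) :=
          Real.rpow_le_rpow_of_nonpos (by positivity)
            (by nlinarith [sq_nonneg (a - E)]) (by norm_num)
        have h2 : ((δ:ℝ) ^ 2) ^ (-(1 / 2 : ℝ)) = δ⁻¹ := by
          rw [← Real.rpow_natCast δ 2, ← Real.rpow_mul hδ.le]
          norm_num [Real.rpow_neg_one]
        calc g a ≤ δ⁻¹ := h2 ▸ h1
          _ ≤ t := le_of_not_gt htδ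
      simp [hempty]
  have hmeas : Measurable fun t : ℝ =>
      (Set.Ioo (0:ℝ) δ⁻¹).indicator (fun t => min 1 (ENNReal.ofReal (2 * A / t))) t := by
    refine Measurable.indicator ?_ measurableSet_Ioo
    exact measurable_const.min (ENNReal.measurable_ofReal.comp (measurable_const.div measurable_id))
  have step1 : ∫⁻ t in Set.Ioi (0:ℝ), τ {a | t < g a}
      ≤ ∫⁻ t in Set.Ioo (0:ℝ) δ⁻¹, min 1 (ENNReal.ofReal (2 * A / t)) := by
    calc ∫⁻ t in Set.Ioi (0:ℝ), τ {a | t < g a}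
        ≤ ∫⁻ t in Set.Ioi (0:ℝ),
            (Set.Ioo (0:ℝ) δ⁻¹).indicator (fun t => min 1 (ENNReal.ofReal (2 * A / t))) t :=
          setLIntegral_mono hmeas hbound
      _ = ∫⁻ t in Set.Ioo (0:ℝ) δ⁻¹, min 1 (ENNReal.ofReal (2 * A / t)) := by
          rw [lintegral_indicator measurableSet_Ioo,
            Measure.restrict_restrict measurableSet_Ioo,
            Set.inter_eq_self_of_subset_left Set.Ioo_subset_Ioi_self]
  refine step1.trans ?_
  set x := 1 / (A * δ) with hx
  have hx0 : 0 < x := by positivity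
  by_cases hcase : δ⁻¹ ≤ 2 * A
  · -- x ≤ 2, trivial bound
    have hx2 : x ≤ 2 := by
      rw [hx, div_le_iff₀ (by positivity)]
      have h := mul_le_mul_of_nonneg_right hcase hδ.le
      rw [inv_mul_cancel₀ (ne_of_gt hδ)] at h
      linarith
    calc ∫⁻ t in Set.Ioo (0:ℝ) δ⁻¹, min 1 (ENNReal.ofReal (2 * A / t))
        ≤ ∫⁻ _ in Set.Ioo (0:ℝ) δ⁻¹, 1 := lintegral_mono fun t => min_le_left _ _
      _ = volume (Set.Ioo (0:ℝ) δ⁻¹) := setLIntegral_one _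
      _ = ENNReal.ofReal δ⁻¹ := by rw [Real.volume_Ioo]; norm_num
      _ ≤ ENNReal.ofReal (3 * A * Real.log (1 + x)) := by
          apply ENNReal.ofReal_le_ofReal
          have h1 := aux1 hx0 hx2
          have h2 : δ⁻¹ = A * x := by rw [hx]; field_simp
          rw [h2]
          nlinarith
  · push_neg at hcase
    have hx2 : 2 < x := by
      rw [hx, lt_div_iff₀ (by positivity)]
      have h := mul_lt_mul_of_pos_right hcase hδ
      rw [inv_mul_cancel₀ (ne_of_gt hδ)] at h
      linarith
    have h2A : (0:ℝ) < 2 * A := by positivity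
    have hdisj : Disjoint (Set.Ioc (0:ℝ) (2 * A)) (Set.Ioo (2 * A) δ⁻¹) := by
      rw [Set.disjoint_left]
      intro t h1 h2
      exact absurd h1.2 (not_le.2 h2.1)
    have hsplit : Set.Ioo (0:ℝ) δ⁻¹ = Set.Ioc 0 (2 * A) ∪ Set.Ioo (2 * A) δ⁻¹ :=
      (Set.Ioc_union_Ioo_eq_Ioo h2A.le hcase).symm
    have hcont : IntegrableOn (fun t : ℝ => 2 * A / t) (Set.Ioo (2 * A) δ⁻¹) := by
      apply IntegrableOn.mono_set ?_ Set.Ioo_subset_Icc_self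
      apply ContinuousOn.integrableOn_Icc
      exact ContinuousOn.div continuousOn_const continuousOn_id
        (fun t ht => ne_of_gt (lt_of_lt_of_le h2A ht.1))
    have hnn : 0 ≤ᵐ[volume.restrict (Set.Ioo (2 * A) δ⁻¹)] fun t : ℝ => 2 * A / t := by
      filter_upwards [ae_restrict_mem measurableSet_Ioo] with t ht
      exact div_nonneg h2A.le (le_of_lt (lt_trans h2A ht.1))
    have hI : ∫⁻ t in Set.Ioo (2 * A) δ⁻¹, ENNReal.ofReal (2 * A / t)
        = ENNReal.ofReal (2 * A * Real.log (δ⁻¹ / (2 * A))) := by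
      rw [← ofReal_integral_eq_lintegral_ofReal hcont hnn]
      congr 1
      have e1 : (∫ t in Set.Ioo (2 * A) δ⁻¹, 2 * A / t)
          = ∫ t in Set.Ioc (2 * A) δ⁻¹, 2 * A / t :=
        (integral_Ioc_eq_integral_Ioo).symm
      rw [e1, ← intervalIntegral.integral_of_le hcase.le]
      have e2 : ∀ t : ℝ, 2 * A / t = 2 * A * t⁻¹ := fun t => div_eq_mul_inv _ _
      simp_rw [e2]
      rw [intervalIntegral.integral_const_mul, integral_inv]
      intro h
      rw [Set.mem_uIcc] at h
      rcases h with h | h <;> linarith [h.1, h.2]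
    have hx2' : (1:ℝ) ≤ δ⁻¹ / (2 * A) := by
      rw [le_div_iff₀ h2A]
      linarith
    have hxhalf : δ⁻¹ / (2 * A) = x / 2 := by
      rw [hx]; field_simp
    calc ∫⁻ t in Set.Ioo (0:ℝ) δ⁻¹, min 1 (ENNReal.ofReal (2 * A / t))
        = (∫⁻ t in Set.Ioc (0:ℝ) (2 * A), min 1 (ENNReal.ofReal (2 * A / t)))
          + ∫⁻ t in Set.Ioo (2 * A) δ⁻¹, min 1 (ENNReal.ofReal (2 * A / t)) := by
          rw [hsplit, lintegral_union measurableSet_Ioo hdisj]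
      _ ≤ ENNReal.ofReal (2 * A) + ENNReal.ofReal (2 * A * Real.log (δ⁻¹ / (2 * A))) := by
          refine add_le_add ?_ ?_
          · calc (∫⁻ t in Set.Ioc (0:ℝ) (2 * A), min 1 (ENNReal.ofReal (2 * A / t)))
                ≤ ∫⁻ _ in Set.Ioc (0:ℝ) (2 * A), 1 := lintegral_mono fun t => min_le_left _ _
              _ = volume (Set.Ioc (0:ℝ) (2 * A)) := setLIntegral_one _
              _ = ENNReal.ofReal (2 * A) := by rw [Real.volume_Ioc]; norm_num
          · calc (∫⁻ t in Set.Ioo (2 * A) δ⁻¹, min 1 (ENNReal.ofReal (2 * A / t)))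
                ≤ ∫⁻ t in Set.Ioo (2 * A) δ⁻¹, ENNReal.ofReal (2 * A / t) :=
                  lintegral_mono fun t => min_le_right _ _
              _ = ENNReal.ofReal (2 * A * Real.log (δ⁻¹ / (2 * A))) := hI
      _ = ENNReal.ofReal (2 * A + 2 * A * Real.log (δ⁻¹ / (2 * A))) := by
          rw [← ENNReal.ofReal_add h2A.le
            (mul_nonneg h2A.le (Real.log_nonneg hx2'))]
      _ ≤ ENNReal.ofReal (3 * A * Real.log (1 + x)) := by
          apply ENNReal.ofReal_le_ofReal
          rw [hxhalf]
          have h1 := aux2 hx2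
          nlinarith
end

section
/- Let σ be a probability measure on ℝ whose restriction to the interval [-ξ, ξ] has density bounded by A. Then for any real number a with |a| ≤ ξ/2 and any δ > 0, ∫ ((v - a)² + δ²)^(-1/2) dσ(v) ≤ 3 A log(1 + 1/(A δ)) + 2/ξ. -/
open MeasureTheory Real
open scoped ENNReal

lemma aux_sq_rpow (c : ℝ) (hc : 0 < c) : ((c^2 : ℝ)) ^ (-(1/2 : ℝ)) = 1/c := by
  rw [show ((c^2 : ℝ)) = c ^ (2:ℝ) by rw [← Real.rpow_natCast c 2]; norm_num,
    ← Real.rpow_mul hc.le]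
  norm_num [Real.rpow_neg_one]

lemma aux_log_lb (z : ℝ) (hz : 0 ≤ z) : z / (1 + z) ≤ Real.log (1 + z) := by
  have h1 : (0:ℝ) < 1 + z := by linarith
  have h := Real.log_le_sub_one_of_pos (x := (1+z)⁻¹) (by positivity)
  rw [Real.log_inv] at h
  have heq : z/(1+z) = 1 - (1+z)⁻¹ := by field_simp; ring
  linarith

set_option maxHeartbeats 1000000 in
theorem stmt_1 (σ : Measure ℝ) [IsProbabilityMeasure σ] (ξ A : ℝ) (hξ : 0 < ξ) (hA : 0 < A)
    (hdens : ∀ s : Set ℝ, MeasurableSet s → s ⊆ Set.Icc (-ξ) ξ →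
      σ s ≤ ENNReal.ofReal A * volume s)
    (a : ℝ) (ha : |a| ≤ ξ / 2) (δ : ℝ) (hδ : 0 < δ) :
    ∫⁻ v, ENNReal.ofReal (((v - a) ^ 2 + δ ^ 2) ^ (-(1 / 2 : ℝ))) ∂σ
      ≤ ENNReal.ofReal (3 * A * Real.log (1 + 1 / (A * δ)) + 2 / ξ) := by
  set f : ℝ → ℝ := fun v => ((v - a) ^ 2 + δ ^ 2) ^ (-(1 / 2 : ℝ)) with hf_def
  have hbase : ∀ v : ℝ, 0 < (v - a) ^ 2 + δ ^ 2 := fun v => by positivity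
  have hf_nonneg : ∀ v, 0 ≤ f v := fun v => Real.rpow_nonneg (hbase v).le _
  have hfδ : ∀ v, f v ≤ 1 / δ := by
    intro v
    calc f v ≤ ((δ:ℝ)^2) ^ (-(1/2:ℝ)) :=
          Real.rpow_le_rpow_of_nonpos (by positivity) (by nlinarith [sq_nonneg (v - a)])
            (by norm_num)
      _ = 1/δ := aux_sq_rpow δ hδ
  have hz0 : (0:ℝ) ≤ 1/(A*δ) := by positivity
  have hlogpos : 0 ≤ Real.log (1 + 1/(A*δ)) := Real.log_nonneg (by linarith)
  have hlvl : ∀ t : ℝ, 0 < t → ∀ v : ℝ, t < f v → |v - a| < 1/t := by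
    intro t ht v hv
    by_contra hcon
    push_neg at hcon
    have h1 : (1/t)^2 ≤ (v-a)^2 := by
      rw [← sq_abs (v - a)]; exact pow_le_pow_left₀ (by positivity) hcon 2
    have h2 : f v ≤ ((1/t)^2 : ℝ) ^ (-(1/2:ℝ)) :=
      Real.rpow_le_rpow_of_nonpos (by positivity) (by nlinarith) (by norm_num)
    rw [aux_sq_rpow (1/t) (by positivity), one_div_one_div] at h2
    exact absurd (hv.trans_le h2) (lt_irrefl t)
  have hf_meas : Measurable f := by
    have hc : Continuous fun v : ℝ => (v - a) ^ 2 + δ ^ 2 := by continuity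
    exact (hc.rpow_const fun v => Or.inl (hbase v).ne').measurable
  have htriv : ∫⁻ v, ENNReal.ofReal (f v) ∂σ ≤ ENNReal.ofReal (1/δ) := by
    calc ∫⁻ v, ENNReal.ofReal (f v) ∂σ ≤ ∫⁻ _, ENNReal.ofReal (1/δ) ∂σ :=
          lintegral_mono fun v => ENNReal.ofReal_le_ofReal (hfδ v)
      _ = ENNReal.ofReal (1/δ) := by simp
  have hAδ : A * (1/(A*δ)) = 1/δ := by field_simp
  rcases le_or_gt (1/δ) (2*A) with hA2 | hA2
  · refine htriv.trans (ENNReal.ofReal_le_ofReal ?_)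
    have hξ0 : (0:ℝ) ≤ 2/ξ := by positivity
    set z := 1/(A*δ) with hz
    have hz2 : z ≤ 2 := by nlinarith [hAδ, hA2, hA]
    have hlb := aux_log_lb z hz0
    have h1z : (0:ℝ) < 1 + z := by linarith
    have hw0 : 0 ≤ z/(1+z) := div_nonneg hz0 h1z.le
    have hAzz : A*z = A*(z/(1+z)) + A*(z/(1+z))*z := by field_simp
    have h3 : 3*A*(z/(1+z)) ≤ 3*A*Real.log (1+z) :=
      mul_le_mul_of_nonneg_left hlb (by positivity)
    nlinarith [mul_nonneg hA.le hw0, h3, hz2, hξ0, hAδ, hAzz]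
  rcases le_or_gt (1/δ) (2/ξ) with hξ2 | hξ2
  · refine htriv.trans (ENNReal.ofReal_le_ofReal ?_)
    nlinarith [mul_nonneg (by positivity : (0:ℝ) ≤ 3*A) hlogpos]
  -- main case: layer cake
  set T := max (2*A) (2/ξ) with hT_def
  have hT0 : 0 < T := lt_max_of_lt_left (by positivity)
  have hTδ : T < 1/δ := max_lt hA2 hξ2
  have hTξ : 2/ξ ≤ T := le_max_right _ _
  have hδT : 0 < δ * T := by positivity
  have hδT1 : δ * T ≤ 1 := by
    have h := mul_lt_mul_of_pos_left hTδ hδ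
    rw [mul_one_div, div_self hδ.ne'] at h
    linarith
  have hlogT : 0 ≤ Real.log (1/(δ*T)) := Real.log_nonneg ((le_div_iff₀ hδT).2 (by linarith))
  have hnn_ae : 0 ≤ᵐ[σ] f := Filter.Eventually.of_forall hf_nonneg
  have hlayer := lintegral_eq_lintegral_meas_lt σ hnn_ae hf_meas.aemeasurable
  calc ∫⁻ v, ENNReal.ofReal (f v) ∂σ
      = ∫⁻ t in Set.Ioi (0:ℝ), σ {v | t < f v} := hlayer
    _ = ∫⁻ t in Set.Ioc 0 T ∪ (Set.Ioc T (1/δ) ∪ Set.Ioi (1/δ)), σ {v | t < f v} := by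
        rw [Set.Ioc_union_Ioi_eq_Ioi hTδ.le, Set.Ioc_union_Ioi_eq_Ioi hT0.le]
    _ ≤ (∫⁻ t in Set.Ioc 0 T, σ {v | t < f v})
        + ((∫⁻ t in Set.Ioc T (1/δ), σ {v | t < f v})
          + ∫⁻ t in Set.Ioi (1/δ), σ {v | t < f v}) :=
        (lintegral_union_le _ _ _).trans (add_le_add_right (lintegral_union_le _ _ _) _)
    _ ≤ ENNReal.ofReal T + (ENNReal.ofReal (2*A*Real.log (1/(δ*T))) + 0) := by
        refine add_le_add ?_ (add_le_add ?_ ?_)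
        · calc ∫⁻ t in Set.Ioc (0:ℝ) T, σ {v | t < f v}
              ≤ ∫⁻ _ in Set.Ioc (0:ℝ) T, 1 ∂volume :=
                setLIntegral_mono' measurableSet_Ioc fun t _ => prob_le_one
            _ = volume (Set.Ioc (0:ℝ) T) := setLIntegral_one _
            _ = ENNReal.ofReal T := by rw [Real.volume_Ioc, sub_zero]
        · -- middle piece
          have hstep : ∀ t ∈ Set.Ioc T (1/δ), σ {v | t < f v} ≤ ENNReal.ofReal (2*A*(1/t)) := by
            intro t ht
            have ht0 : 0 < t := hT0.trans ht.1
            have htξ : 1/t ≤ ξ/2 := by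
              have hh := one_div_le_one_div_of_le (by positivity : (0:ℝ) < 2/ξ)
                (hTξ.trans ht.1.le)
              rwa [one_div_div] at hh
            have hsubset : {v : ℝ | t < f v} ⊆ Set.Icc (-ξ) ξ := by
              intro v hv
              have h1 : |v - a| < 1/t := hlvl t ht0 v hv
              have h2 : |v| ≤ |v - a| + |a| := by
                calc |v| = |(v-a) + a| := by ring_nf
                  _ ≤ _ := abs_add_le _ _
              have h3 : |v| ≤ ξ := by linarith
              exact Set.mem_Icc.2 (abs_le.1 h3)
            have hmeas : MeasurableSet {v : ℝ | t < f v} :=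
              measurableSet_lt measurable_const hf_meas
            calc σ {v | t < f v} ≤ ENNReal.ofReal A * volume {v | t < f v} :=
                  hdens _ hmeas hsubset
              _ ≤ ENNReal.ofReal A * volume (Set.Ioo (a - 1/t) (a + 1/t)) := by
                  gcongr
                  intro v hv
                  have h1 := hlvl t ht0 v hv
                  rw [abs_lt] at h1
                  exact ⟨by linarith [h1.1], by linarith [h1.2]⟩
              _ = ENNReal.ofReal A * ENNReal.ofReal (2*(1/t)) := by
                  rw [Real.volume_Ioo]; congr 1; ring
              _ = ENNReal.ofReal (2*A*(1/t)) := by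
                  rw [← ENNReal.ofReal_mul hA.le]; congr 1; ring
          have hval : ∫⁻ t in Set.Ioc T (1/δ), ENNReal.ofReal (2*A*(1/t))
              = ENNReal.ofReal (2*A*Real.log (1/(δ*T))) := by
            have hcont : ContinuousOn (fun t : ℝ => 2*A*(1/t)) (Set.Icc T (1/δ)) := by
              apply ContinuousOn.mul continuousOn_const
              exact ContinuousOn.div continuousOn_const continuousOn_id
                fun t ht => (hT0.trans_le ht.1).ne'
            have hint : IntegrableOn (fun t : ℝ => 2*A*(1/t)) (Set.Ioc T (1/δ)) volume :=
              (hcont.integrableOn_Icc).mono_set Set.Ioc_subset_Icc_self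
            have hnn : 0 ≤ᵐ[volume.restrict (Set.Ioc T (1/δ))] fun t => 2*A*(1/t) := by
              filter_upwards [ae_restrict_mem measurableSet_Ioc] with t ht
              have ht0 : 0 < t := hT0.trans ht.1
              positivity
            rw [← ofReal_integral_eq_lintegral_ofReal hint hnn]
            congr 1
            rw [← intervalIntegral.integral_of_le hTδ.le,
              intervalIntegral.integral_const_mul,
              integral_one_div (by
                rw [Set.uIcc_of_le hTδ.le]
                intro hmem
                exact absurd hmem.1 (not_le.2 hT0))]
            rw [div_div]
          exact (setLIntegral_mono' measurableSet_Ioc hstep).trans hval.le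
        · -- tail piece is zero
          have hzero : ∀ t ∈ Set.Ioi (1/δ), σ {v | t < f v} ≤ 0 := by
            intro t ht
            have hempty : {v : ℝ | t < f v} = ∅ :=
              Set.eq_empty_iff_forall_notMem.2 fun v hv =>
                absurd (hv.trans_le (hfδ v)) (not_lt.2 ht.le)
            simp [hempty]
          calc ∫⁻ t in Set.Ioi (1/δ), σ {v | t < f v}
              ≤ ∫⁻ _ in Set.Ioi (1/δ), 0 ∂volume := setLIntegral_mono' measurableSet_Ioi hzero
            _ = 0 := by simp
    _ ≤ ENNReal.ofReal (3 * A * Real.log (1 + 1 / (A * δ)) + 2 / ξ) := by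
        rw [add_zero, ← ENNReal.ofReal_add hT0.le (by positivity)]
        apply ENNReal.ofReal_le_ofReal
        set z := 1/(A*δ) with hz
        have hz2 : 2 < z := by nlinarith [hAδ, hA2, hA]
        rcases le_total (2/ξ) (2*A) with hc | hc
        · have hTA : T = 2*A := max_eq_left hc
          rw [hTA]
          have e1 : 1/(δ*(2*A)) = z/2 := by rw [hz]; field_simp
          rw [e1]
          have hlz : Real.log (z/2) = Real.log z - Real.log 2 :=
            Real.log_div (by linarith) two_ne_zero
          have h1 : Real.log z ≤ Real.log (1+z) := Real.log_le_log (by linarith) (by linarith)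
          have h2 : Real.log 2 ≤ Real.log z := Real.log_le_log two_pos hz2.le
          have h3 := Real.log_two_gt_d9
          have hξ0 : (0:ℝ) ≤ 2/ξ := by positivity
          have hkey := mul_le_mul_of_nonneg_left
            (show 2*Real.log (z/2) + 2 ≤ 3*Real.log (1+z) by rw [hlz]; linarith) hA.le
          linarith
        · have hTA : T = 2/ξ := max_eq_right hc
          rw [hTA]
          have e2 : 1/(δ*(2/ξ)) = ξ/(2*δ) := by
            rw [show δ*(2/ξ) = (2*δ)/ξ by ring, one_div_div]
          rw [e2]
          have hzδ : z*δ = 1/A := by rw [hz]; field_simp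
          have hξA : 2*A*ξ ≤ 2 := (le_div_iff₀ hξ).1 hc
          have h5 : z*(2*δ) = 2/A := by rw [hz]; field_simp
          have hxz : ξ/(2*δ) ≤ z/2 := by
            rw [div_le_div_iff₀ (by positivity) (by norm_num), h5, le_div_iff₀ hA]
            linarith
          have h4 : Real.log (ξ/(2*δ)) ≤ Real.log (1+z) :=
            Real.log_le_log (by positivity) (by linarith)
          linarith [mul_le_mul_of_nonneg_left h4 (by positivity : (0:ℝ) ≤ 2*A),
            mul_nonneg hA.le hlogpos]
end

section
/- For every α with 1/2 < α < 1 there exists a constant C_α such that for every complex number d with 0 < |d| < 1, one has ∫_{-1}^{1} |x(x - d)|^(-α) dx ≤ C_α |d|^(-(2α - 1)). -/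
open MeasureTheory Real Set
set_option maxHeartbeats 1000000

lemma helperInt {e : ℝ → ℝ} (he : MeasurableEmbedding e)
    (hm : Measure.map e volume = volume) {g : ℝ → ℝ} {s : Set ℝ} (hs : MeasurableSet s)
    (h : IntegrableOn g s volume) : IntegrableOn (fun x => g (e x)) (e ⁻¹' s) volume := by
  have h2 : volume.restrict s = Measure.map e (volume.restrict (e ⁻¹' s)) := by
    conv_lhs => rw [← hm]
    rw [Measure.restrict_map he.measurable hs]
  rw [IntegrableOn, h2, he.integrable_map_iff] at h
  exact h

lemma helperEq {e : ℝ → ℝ} (he : MeasurableEmbedding e)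
    (hm : Measure.map e volume = volume) (g : ℝ → ℝ) (s : Set ℝ) :
    ∫ x in e ⁻¹' s, g (e x) = ∫ x in s, g x := by
  have := he.setIntegral_map (μ := volume) g s
  rw [hm] at this
  exact this.symm

lemma negEmb : MeasurableEmbedding (fun x : ℝ => -x) :=
  (Homeomorph.neg ℝ).isClosedEmbedding.measurableEmbedding

lemma negMap : Measure.map (fun x : ℝ => -x) volume = volume :=
  Measure.map_neg_eq_self _

lemma posInt {p : ℝ} (hp : -1 < p) {c : ℝ} (hc : 0 < c) :
    IntegrableOn (fun x : ℝ => |x| ^ p) (Ioc 0 c) volume := by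
  have h0 : IntegrableOn (fun x : ℝ => x ^ p) (Ioc 0 c) volume := by
    have := intervalIntegral.intervalIntegrable_rpow' (a := 0) (b := c) hp
    rwa [intervalIntegrable_iff, uIoc_of_le hc.le] at this
  exact h0.congr_fun (fun x hx => by rw [abs_of_pos hx.1]) measurableSet_Ioc

lemma posVal {p : ℝ} (hp : -1 < p) {c : ℝ} (hc : 0 < c) :
    ∫ x in Ioc 0 c, |x| ^ p = c ^ (p + 1) / (p + 1) := by
  have h1 : ∫ x in Ioc 0 c, |x| ^ p = ∫ x in Ioc 0 c, x ^ p :=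
    setIntegral_congr_fun measurableSet_Ioc (fun x hx => by rw [abs_of_pos hx.1])
  rw [h1, ← intervalIntegral.integral_of_le hc.le, integral_rpow (Or.inl hp),
    Real.zero_rpow (by linarith), sub_zero]

lemma negpre {c : ℝ} : (fun x : ℝ => -x) ⁻¹' (Ioc 0 c) = Ico (-c) 0 := by
  ext x
  constructor
  · rintro ⟨h1, h2⟩; exact ⟨by simp at h2 ⊢; linarith, by simp at h1 ⊢; linarith⟩
  · rintro ⟨h1, h2⟩; exact ⟨by simp at h2 ⊢; linarith, by simp at h1 ⊢; linarith⟩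

lemma icoInt {p : ℝ} (hp : -1 < p) {c : ℝ} (hc : 0 < c) :
    IntegrableOn (fun x : ℝ => |x| ^ p) (Ico (-c) 0) volume := by
  have := helperInt negEmb negMap measurableSet_Ioc (posInt hp hc)
  rw [negpre] at this
  exact this.congr_fun (fun x _ => by show |(-x)| ^ p = |x| ^ p; rw [abs_neg]) measurableSet_Ico

lemma icoVal {p : ℝ} (hp : -1 < p) {c : ℝ} (hc : 0 < c) :
    ∫ x in Ico (-c) 0, |x| ^ p = c ^ (p + 1) / (p + 1) := by
  rw [← negpre (c := c)]
  have h : ∫ x in (fun x : ℝ => -x) ⁻¹' (Ioc 0 c), |x| ^ p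
      = ∫ x in (fun x : ℝ => -x) ⁻¹' (Ioc 0 c), |(-x)| ^ p := by
    apply setIntegral_congr_fun (by rw [negpre]; exact measurableSet_Ico)
    intro x _; show |x| ^ p = |(-x)| ^ p; rw [abs_neg]
  rw [h, helperEq negEmb negMap (fun x => |x| ^ p) (Ioc 0 c), posVal hp hc]

lemma absInt {p : ℝ} (hp : -1 < p) {c : ℝ} (hc : 0 < c) :
    IntegrableOn (fun x : ℝ => |x| ^ p) (Icc (-c) c) volume := by
  have := (icoInt hp hc).union ((posInt hp hc).congr_set_ae Ioc_ae_eq_Icc.symm)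
  rwa [Set.Ico_union_Icc_eq_Icc (by linarith) hc.le] at this

lemma absVal {p : ℝ} (hp : -1 < p) {c : ℝ} (hc : 0 < c) :
    ∫ x in Icc (-c) c, |x| ^ p = 2 * c ^ (p + 1) / (p + 1) := by
  have hicc : ∫ x in Icc 0 c, |x| ^ p = c ^ (p + 1) / (p + 1) := by
    rw [← posVal hp hc]
    exact setIntegral_congr_set Ioc_ae_eq_Icc.symm
  rw [← Set.Ico_union_Icc_eq_Icc (by linarith : -c ≤ 0) hc.le]
  rw [setIntegral_union (by rw [Set.disjoint_left]; rintro x ⟨_, h0⟩ ⟨h0', _⟩; linarith)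
      measurableSet_Icc (icoInt hp hc) ((posInt hp hc).congr_set_ae Ioc_ae_eq_Icc.symm)]
  rw [icoVal hp hc, hicc]
  ring

lemma tailIntPos {q : ℝ} (hq : q < -1) {s : ℝ} (hs : 0 < s) :
    IntegrableOn (fun x : ℝ => |x| ^ q) (Ioi s) volume :=
  (integrableOn_Ioi_rpow_of_lt hq hs).congr_fun
    (fun x hx => by rw [abs_of_pos (hs.trans hx)]) measurableSet_Ioi

lemma tailValPos {q : ℝ} (hq : q < -1) {s : ℝ} (hs : 0 < s) :
    ∫ x in Ioi s, |x| ^ q = -s ^ (q + 1) / (q + 1) := by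
  have h1 : ∫ x in Ioi s, |x| ^ q = ∫ x in Ioi s, x ^ q :=
    setIntegral_congr_fun measurableSet_Ioi (fun x hx => by rw [abs_of_pos (hs.trans hx)])
  rw [h1, integral_Ioi_rpow_of_lt hq hs]

lemma negpreIoi {s : ℝ} : (fun x : ℝ => -x) ⁻¹' (Ioi s) = Iio (-s) := by
  ext x; simp [lt_neg]

lemma tailIntNeg {q : ℝ} (hq : q < -1) {s : ℝ} (hs : 0 < s) :
    IntegrableOn (fun x : ℝ => |x| ^ q) (Iio (-s)) volume := by
  have := helperInt negEmb negMap measurableSet_Ioi (tailIntPos hq hs)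
  rw [negpreIoi] at this
  exact this.congr_fun (fun x _ => by show |(-x)| ^ q = |x| ^ q; rw [abs_neg]) measurableSet_Iio

lemma tailValNeg {q : ℝ} (hq : q < -1) {s : ℝ} (hs : 0 < s) :
    ∫ x in Iio (-s), |x| ^ q = -s ^ (q + 1) / (q + 1) := by
  rw [← negpreIoi (s := s)]
  have h : ∫ x in (fun x : ℝ => -x) ⁻¹' (Ioi s), |x| ^ q
      = ∫ x in (fun x : ℝ => -x) ⁻¹' (Ioi s), |(-x)| ^ q := by
    apply setIntegral_congr_fun (by rw [negpreIoi]; exact measurableSet_Iio)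
    intro x _; show |x| ^ q = |(-x)| ^ q; rw [abs_neg]
  rw [h, helperEq negEmb negMap (fun x => |x| ^ q) (Ioi s), tailValPos hq hs]

-- translation: |x - s|^p on Icc(-2s, 2s)
lemma addEmb (c : ℝ) : MeasurableEmbedding (fun x : ℝ => x + c) :=
  (Homeomorph.addRight c).isClosedEmbedding.measurableEmbedding

lemma addMap (c : ℝ) : Measure.map (fun x : ℝ => x + c) volume = volume :=
  map_add_right_eq_self volume c

lemma addpre {s : ℝ} (hs : 0 < s) :
    (fun x : ℝ => x + -s) ⁻¹' (Icc (-(3*s)) (3*s)) = Icc (-(2*s)) (4*s) := by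
  ext x
  simp only [mem_preimage, mem_Icc]
  constructor <;> rintro ⟨h1, h2⟩ <;> constructor <;> linarith

lemma transInt {p : ℝ} (hp : -1 < p) {s : ℝ} (hs : 0 < s) :
    IntegrableOn (fun x : ℝ => |x - s| ^ p) (Icc (-(2*s)) (2*s)) volume := by
  have h := helperInt (addEmb (-s)) (addMap (-s)) measurableSet_Icc
    (absInt hp (by linarith : (0:ℝ) < 3*s))
  rw [addpre hs] at h
  have h2 : IntegrableOn (fun x : ℝ => |x + -s| ^ p) (Icc (-(2*s)) (2*s)) volume :=
    h.mono_set (Icc_subset_Icc le_rfl (by linarith))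
  exact h2.congr_fun (fun x _ => by rw [sub_eq_add_neg]) measurableSet_Icc

lemma transVal {p : ℝ} (hp : -1 < p) (hp0 : p < 0) {s : ℝ} (hs : 0 < s) :
    ∫ x in Icc (-(2*s)) (2*s), |x - s| ^ p ≤ 2 * (3*s) ^ (p + 1) / (p + 1) := by
  have h1 : ∫ x in Icc (-(2*s)) (2*s), |x - s| ^ p
      ≤ ∫ x in Icc (-(2*s)) (4*s), |x + -s| ^ p := by
    have heq : ∫ x in Icc (-(2*s)) (2*s), |x - s| ^ p
        = ∫ x in Icc (-(2*s)) (2*s), |x + -s| ^ p := by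
      apply setIntegral_congr_fun measurableSet_Icc
      intro x _; show |x - s| ^ p = |x + -s| ^ p; rw [sub_eq_add_neg]
    rw [heq]
    apply setIntegral_mono_set
    · have h := helperInt (addEmb (-s)) (addMap (-s)) measurableSet_Icc
        (absInt hp (by linarith : (0:ℝ) < 3*s))
      rwa [addpre hs] at h
    · filter_upwards with x using rpow_nonneg (abs_nonneg _) p
    · exact HasSubset.Subset.eventuallyLE (Icc_subset_Icc le_rfl (by linarith))
  have h2 : ∫ x in Icc (-(2*s)) (4*s), |x + -s| ^ p = 2 * (3*s) ^ (p + 1) / (p + 1) := by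
    rw [← addpre hs, helperEq (addEmb (-s)) (addMap (-s)) (fun x => |x| ^ p) _,
      absVal hp (by linarith : (0:ℝ) < 3*s)]
  linarith

noncomputable def Kc (α : ℝ) : ℝ :=
  (2:ℝ)^α * (2*(2:ℝ)^((-α)+1)/((-α)+1) + 2*(3:ℝ)^((-α)+1)/((-α)+1)) + (2:ℝ)^α * (2/(2*α-1))

lemma mainReal (α : ℝ) (hα : 1/2 < α) (hα1 : α < 1) (s : ℝ) (hs : 0 < s) :
    IntegrableOn (fun x : ℝ => |x| ^ (-α) * |x - s| ^ (-α)) (Icc (-1:ℝ) 1) volume ∧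
    ∫ x in Icc (-1:ℝ) 1, |x| ^ (-α) * |x - s| ^ (-α) ≤ Kc α * s ^ (-(2*α - 1)) := by
  have hp : (-1:ℝ) < -α := by linarith
  have hq : -(2*α) < -1 := by linarith
  have h2s : (0:ℝ) < 2*s := by linarith
  set φ : ℝ → ℝ := fun x => |x| ^ (-α) * |x - s| ^ (-α) with hφ
  set A : Set ℝ := Icc (-(2*s)) (2*s) with hA
  have φmeas : Measurable φ :=
    (measurable_abs.pow_const (-α)).mul (((measurable_id.sub_const s).abs).pow_const (-α))
  have φnn : ∀ x, 0 ≤ φ x := fun x =>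
    mul_nonneg (rpow_nonneg (abs_nonneg _) _) (rpow_nonneg (abs_nonneg _) _)
  have hD1 : ∀ x : ℝ, φ x ≤ (s/2)^(-α) * (|x|^(-α) + |x - s|^(-α)) := by
    intro x
    have h2 : (0:ℝ) ≤ |x-s|^(-α) := rpow_nonneg (abs_nonneg _) _
    have h3 : (0:ℝ) ≤ |x|^(-α) := rpow_nonneg (abs_nonneg _) _
    have h0 : (0:ℝ) ≤ (s/2)^(-α) := rpow_nonneg (by linarith) _
    show |x|^(-α) * |x - s|^(-α) ≤ (s/2)^(-α) * (|x|^(-α) + |x - s|^(-α))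
    rcases le_or_gt (s/2) |x| with h | h
    · have h1 : |x| ^ (-α) ≤ (s/2) ^ (-α) :=
        rpow_le_rpow_of_nonpos (half_pos hs) h (by linarith)
      nlinarith [mul_le_mul_of_nonneg_right h1 h2, mul_nonneg h0 h3]
    · have hxs : s/2 ≤ |x - s| := by
        have h4 : x ≤ |x| := le_abs_self x
        have h5 : s - x ≤ |x - s| := by rw [abs_sub_comm]; exact le_abs_self _
        linarith
      have h1 : |x - s| ^ (-α) ≤ (s/2) ^ (-α) :=
        rpow_le_rpow_of_nonpos (half_pos hs) hxs (by linarith)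
      nlinarith [mul_le_mul_of_nonneg_right h1 h3, mul_nonneg h0 h2]
  -- pointwise bound off A
  have hD2 : ∀ x ∈ Icc (-1:ℝ) 1 \ A, φ x ≤ 2^α * |x|^(-(2*α)) := by
    intro x hx
    have h2sx : 2*s < |x| := by
      by_contra hcon
      push_neg at hcon
      exact hx.2 (abs_le.mp hcon)
    have hx0 : (0:ℝ) < |x| := by linarith
    have hxs : |x|/2 ≤ |x - s| := by
      have h5 : |x| - |s| ≤ |x - s| := abs_sub_abs_le_abs_sub x s
      rw [abs_of_pos hs] at h5
      linarith
    have h1 : |x - s| ^ (-α) ≤ (|x|/2) ^ (-α) :=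
      rpow_le_rpow_of_nonpos (by linarith) hxs (by linarith)
    have h2 : (|x|/2) ^ (-α) = |x|^(-α) * 2^α := by
      rw [Real.div_rpow (abs_nonneg x) (by norm_num : (0:ℝ) ≤ 2),
        Real.rpow_neg (by norm_num : (0:ℝ) ≤ 2), div_eq_mul_inv, inv_inv]
    have h3 : |x|^(-α) * (|x|^(-α) * 2^α) = 2^α * |x|^(-(2*α)) := by
      rw [← mul_assoc, ← Real.rpow_add hx0]
      rw [show (-α) + (-α) = -(2*α) by ring, mul_comm]
    calc φ x = |x|^(-α) * |x - s|^(-α) := rfl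
      _ ≤ |x|^(-α) * ((|x|/2) ^ (-α)) :=
          mul_le_mul_of_nonneg_left h1 (rpow_nonneg (abs_nonneg _) _)
      _ = 2^α * |x|^(-(2*α)) := by rw [h2, h3]
  -- integrability pieces
  have intA1 : IntegrableOn (fun x : ℝ => |x| ^ (-α)) A volume := absInt hp h2s
  have intA2 : IntegrableOn (fun x : ℝ => |x - s| ^ (-α)) A volume := transInt hp hs
  have intgA : IntegrableOn (fun x : ℝ => (s/2)^(-α) * (|x|^(-α) + |x - s|^(-α))) A volume :=
    (intA1.add intA2).const_mul _
  have intφA : IntegrableOn φ A volume := by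
    apply Integrable.mono' intgA (φmeas.aestronglyMeasurable)
    filter_upwards with x
    rw [Real.norm_eq_abs, abs_of_nonneg (φnn x)]
    exact hD1 x
  have hsub : Icc (-1:ℝ) 1 \ A ⊆ Ioi s ∪ Iio (-s) := by
    intro x hx
    have h2sx : 2*s < |x| := by
      by_contra hcon
      push_neg at hcon
      exact hx.2 (abs_le.mp hcon)
    rcases abs_cases x with ⟨he, _⟩ | ⟨he, _⟩
    · left; rw [mem_Ioi]; linarith
    · right; rw [mem_Iio]; linarith
  have intgBU : IntegrableOn (fun x : ℝ => 2^α * |x|^(-(2*α))) (Ioi s ∪ Iio (-s)) volume :=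
    ((tailIntPos hq hs).union (tailIntNeg hq hs)).const_mul _
  have intgB : IntegrableOn (fun x : ℝ => 2^α * |x|^(-(2*α))) (Icc (-1:ℝ) 1 \ A) volume :=
    intgBU.mono_set hsub
  have intφD : IntegrableOn φ (Icc (-1:ℝ) 1 \ A) volume := by
    apply Integrable.mono' intgB (φmeas.aestronglyMeasurable)
    rw [ae_restrict_iff' (measurableSet_Icc.diff measurableSet_Icc)]
    filter_upwards with x hx
    rw [Real.norm_eq_abs, abs_of_nonneg (φnn x)]
    exact hD2 x hx
  have intφ : IntegrableOn φ (Icc (-1:ℝ) 1) volume := by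
    rw [← Set.inter_union_diff (Icc (-1:ℝ) 1) A]
    exact (intφA.mono_set inter_subset_right).union intφD
  refine ⟨intφ, ?_⟩
  -- split the integral
  have split : ∫ x in Icc (-1:ℝ) 1, φ x
      = (∫ x in Icc (-1:ℝ) 1 ∩ A, φ x) + ∫ x in Icc (-1:ℝ) 1 \ A, φ x :=
    (integral_inter_add_diff measurableSet_Icc intφ).symm
  have bound1 : ∫ x in Icc (-1:ℝ) 1 ∩ A, φ x ≤ ∫ x in A, φ x :=
    setIntegral_mono_set intφA (Filter.Eventually.of_forall φnn)
      (HasSubset.Subset.eventuallyLE inter_subset_right)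
  have bound2 : ∫ x in A, φ x
      ≤ (s/2)^(-α) * (2*(2*s)^((-α)+1)/((-α)+1) + 2*(3*s)^((-α)+1)/((-α)+1)) := by
    have b1 : ∫ x in A, φ x ≤ ∫ x in A, (s/2)^(-α) * (|x|^(-α) + |x - s|^(-α)) :=
      setIntegral_mono_on intφA intgA measurableSet_Icc (fun x _ => hD1 x)
    have b2 : ∫ x in A, (s/2)^(-α) * (|x|^(-α) + |x - s|^(-α))
        = (s/2)^(-α) * ((∫ x in A, |x|^(-α)) + ∫ x in A, |x - s|^(-α)) := by
      rw [integral_const_mul, integral_add intA1 intA2]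
    have b3 : (∫ x in A, |x|^(-α)) = 2*(2*s)^((-α)+1)/((-α)+1) := absVal hp h2s
    have b4 : (∫ x in A, |x - s|^(-α)) ≤ 2*(3*s)^((-α)+1)/((-α)+1) :=
      transVal hp (by linarith) hs
    have b5 : (0:ℝ) ≤ (s/2)^(-α) := rpow_nonneg (by linarith) _
    calc ∫ x in A, φ x ≤ _ := b1
      _ = _ := b2
      _ ≤ (s/2)^(-α) * (2*(2*s)^((-α)+1)/((-α)+1) + 2*(3*s)^((-α)+1)/((-α)+1)) := by
          apply mul_le_mul_of_nonneg_left _ b5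
          rw [b3]
          exact add_le_add (le_refl _) b4
  have bound3 : ∫ x in Icc (-1:ℝ) 1 \ A, φ x
      ≤ 2^α * (-s^((-(2*α))+1)/((-(2*α))+1) + -s^((-(2*α))+1)/((-(2*α))+1)) := by
    have b1 : ∫ x in Icc (-1:ℝ) 1 \ A, φ x
        ≤ ∫ x in Icc (-1:ℝ) 1 \ A, 2^α * |x|^(-(2*α)) :=
      setIntegral_mono_on intφD intgB (measurableSet_Icc.diff measurableSet_Icc) hD2
    have b2 : ∫ x in Icc (-1:ℝ) 1 \ A, 2^α * |x|^(-(2*α))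
        ≤ ∫ x in Ioi s ∪ Iio (-s), 2^α * |x|^(-(2*α)) :=
      setIntegral_mono_set intgBU
        (Filter.Eventually.of_forall (fun x =>
          mul_nonneg (rpow_nonneg (by norm_num) _) (rpow_nonneg (abs_nonneg _) _)))
        (HasSubset.Subset.eventuallyLE hsub)
    have b3 : ∫ x in Ioi s ∪ Iio (-s), 2^α * |x|^(-(2*α))
        = 2^α * (-s^((-(2*α))+1)/((-(2*α))+1) + -s^((-(2*α))+1)/((-(2*α))+1)) := by
      rw [setIntegral_union (by
            rw [Set.disjoint_left]; intro x hx1 hx2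
            rw [mem_Ioi] at hx1; rw [mem_Iio] at hx2; linarith)
          measurableSet_Iio ((tailIntPos hq hs).const_mul _) ((tailIntNeg hq hs).const_mul _),
        integral_const_mul, integral_const_mul, tailValPos hq hs, tailValNeg hq hs, mul_add]
    linarith
  -- algebra
  have e1 : (s/2) ^ (-α) = s^(-α) * 2^α := by
    rw [Real.div_rpow hs.le (by norm_num : (0:ℝ) ≤ 2),
      Real.rpow_neg (by norm_num : (0:ℝ) ≤ 2), div_eq_mul_inv, inv_inv]
  have e2 : (2*s)^((-α)+1) = 2^((-α)+1) * s^((-α)+1) :=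
    Real.mul_rpow (by norm_num) hs.le
  have e3 : (3*s)^((-α)+1) = 3^((-α)+1) * s^((-α)+1) :=
    Real.mul_rpow (by norm_num) hs.le
  have e4 : s^(-α) * s^((-α)+1) = s ^ (-(2*α-1)) := by
    rw [← Real.rpow_add hs]; congr 1; ring
  have e5 : s^((-(2*α))+1) = s ^ (-(2*α-1)) := by congr 1; ring
  rw [split]
  have final : (s/2)^(-α) * (2*(2*s)^((-α)+1)/((-α)+1) + 2*(3*s)^((-α)+1)/((-α)+1))
      + 2^α * (-s^((-(2*α))+1)/((-(2*α))+1) + -s^((-(2*α))+1)/((-(2*α))+1))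
      = Kc α * s ^ (-(2*α-1)) := by
    have e6 : -s^(-(2*α-1))/((-(2*α))+1) = s^(-(2*α-1))/(2*α-1) := by
      rw [show (-(2*α))+1 = -(2*α-1) by ring, neg_div_neg_eq]
    rw [e1, e2, e3, e5, e6, Kc]
    generalize s ^ (-α) = u at e4 ⊢
    generalize s ^ ((-α)+1) = v at e4 ⊢
    generalize s ^ (-(2*α-1)) = w at e4 ⊢
    linear_combination ((2:ℝ)^α * (2*(2:ℝ)^((-α)+1)/((-α)+1) + 2*(3:ℝ)^((-α)+1)/((-α)+1))) * e4
  linarith [bound1, bound2, bound3]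

lemma negpreIcc : (fun x : ℝ => -x) ⁻¹' Icc (-1 : ℝ) 1 = Icc (-1 : ℝ) 1 := by
  ext x
  simp only [mem_preimage, mem_Icc]
  constructor <;> rintro ⟨h1, h2⟩ <;> constructor <;> linarith

lemma mainReal' (α : ℝ) (hα : 1/2 < α) (hα1 : α < 1) (s : ℝ) (hs : s ≠ 0) :
    IntegrableOn (fun x : ℝ => |x| ^ (-α) * |x - s| ^ (-α)) (Icc (-1:ℝ) 1) volume ∧
    ∫ x in Icc (-1:ℝ) 1, |x| ^ (-α) * |x - s| ^ (-α) ≤ Kc α * |s| ^ (-(2*α - 1)) := by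
  rcases hs.lt_or_gt with hneg | hpos
  · set t : ℝ := -s with ht
    have htpos : 0 < t := by simp [ht]; linarith
    obtain ⟨h1, h2⟩ := mainReal α hα hα1 t htpos
    have habs : |s| = t := by rw [abs_of_neg hneg]
    have hfun : ∀ x : ℝ, |(-x)| ^ (-α) * |(-x) - t| ^ (-α) = |x| ^ (-α) * |x - s| ^ (-α) := by
      intro x
      have : |(-x) - t| = |x - s| := by
        rw [show (-x) - t = -(x - s) by simp [ht]; ring, abs_neg]
      rw [abs_neg, this]
    constructor
    · have := helperInt negEmb negMap measurableSet_Icc h1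
      rw [negpreIcc] at this
      exact this.congr_fun (fun x _ => hfun x) measurableSet_Icc
    · have heq : ∫ x in Icc (-1:ℝ) 1, |x| ^ (-α) * |x - s| ^ (-α)
          = ∫ x in Icc (-1:ℝ) 1, |x| ^ (-α) * |x - t| ^ (-α) := by
        have e := helperEq negEmb negMap (fun x => |x| ^ (-α) * |x - t| ^ (-α)) (Icc (-1:ℝ) 1)
        rw [negpreIcc] at e
        rw [← e]
        exact setIntegral_congr_fun measurableSet_Icc (fun x _ => (hfun x).symm)
      rw [heq, habs]
      exact h2
  · obtain ⟨h1, h2⟩ := mainReal α hα hα1 s hpos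
    rw [abs_of_pos hpos]
    exact ⟨h1, h2⟩

theorem stmt_2 (α : ℝ) (hα : 1 / 2 < α) (hα1 : α < 1) :
    ∃ C : ℝ, ∀ d : ℂ, 0 < ‖d‖ → ‖d‖ < 1 →
      ∫ x in Set.Icc (-1 : ℝ) 1, ‖(x : ℂ) * ((x : ℂ) - d)‖ ^ (-α)
        ≤ C * ‖d‖ ^ (-(2 * α - 1)) := by
  refine ⟨(Real.sqrt 2) ^ α * Kc α, ?_⟩
  intro d hd _hd1
  set r : ℝ := ‖d‖ with hr
  set s : ℝ := if 0 ≤ d.re then r else -r with hsdef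
  have hsne : s ≠ 0 := by
    by_cases h : 0 ≤ d.re <;> simp [hsdef, h] <;> intro hc <;> rw [hc] at hd <;> exact lt_irrefl _ hd
  have hsabs : |s| = r := by
    by_cases h : 0 ≤ d.re <;> simp [hsdef, h, abs_of_pos hd, abs_of_neg (neg_neg_iff_pos.mpr hd)]
  have hs2 : s ^ 2 = d.re ^ 2 + d.im ^ 2 := by
    have h1 : r ^ 2 = d.re ^ 2 + d.im ^ 2 := by
      rw [hr, Complex.sq_norm, Complex.normSq_apply]; ring
    by_cases h : 0 ≤ d.re <;> simp [hsdef, h] <;> nlinarith [h1]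
  have hre : |d.re| ≤ r := Complex.abs_re_le_norm d
  have hgeo : ∀ x : ℝ, (x - s) ^ 2 / 2 ≤ (‖(x:ℂ) - d‖) ^ 2 := by
    intro x
    have habs2 : (‖(x:ℂ) - d‖) ^ 2 = (x - d.re) ^ 2 + d.im ^ 2 := by
      rw [Complex.sq_norm, Complex.normSq_apply]
      simp [Complex.sub_re, Complex.sub_im, Complex.ofReal_re, Complex.ofReal_im]
      ring
    rw [habs2]
    by_cases h : 0 ≤ d.re
    · have hsr : s = r := if_pos h
      have h1 : d.re ≤ r := le_trans (le_abs_self _) hre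
      nlinarith [sq_nonneg (x - (2 * d.re - s)), hs2]
    · have hsr : s = -r := if_neg h
      push_neg at h
      have h1 : -r ≤ d.re := neg_le_of_abs_le hre
      nlinarith [sq_nonneg (x - (2 * d.re - s)), hs2]
  -- pointwise bound away from s
  have hpt : ∀ x : ℝ, x ≠ s →
      (‖(x : ℂ) * ((x : ℂ) - d)‖) ^ (-α)
        ≤ (Real.sqrt 2) ^ α * (|x| ^ (-α) * |x - s| ^ (-α)) := by
    intro x hxs
    have hxspos : 0 < |x - s| := abs_pos.mpr (sub_ne_zero.mpr hxs)
    have hsq2 : (0:ℝ) < Real.sqrt 2 := Real.sqrt_pos.mpr (by norm_num)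
    have h1 : |x - s| / Real.sqrt 2 ≤ ‖(x:ℂ) - d‖ := by
      have hg := hgeo x
      have hsq : (Real.sqrt 2) ^ 2 = 2 := Real.sq_sqrt (by norm_num)
      have hnn : (0:ℝ) ≤ ‖(x:ℂ) - d‖ := norm_nonneg _
      rw [div_le_iff₀ hsq2]
      nlinarith [sq_abs (x - s), abs_nonneg (x - s), mul_nonneg hnn hsq2.le]
    have h2 : (‖(x:ℂ) - d‖) ^ (-α) ≤ (|x - s| / Real.sqrt 2) ^ (-α) :=
      rpow_le_rpow_of_nonpos (div_pos hxspos hsq2) h1 (by linarith)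
    have h3 : (|x - s| / Real.sqrt 2) ^ (-α) = |x - s| ^ (-α) * (Real.sqrt 2) ^ α := by
      rw [Real.div_rpow (abs_nonneg _) hsq2.le, Real.rpow_neg hsq2.le,
        div_eq_mul_inv, inv_inv]
    have h4 : ‖(x : ℂ) * ((x : ℂ) - d)‖ = |x| * ‖(x:ℂ) - d‖ := by
      rw [norm_mul, Complex.norm_real, Real.norm_eq_abs]
    rw [h4, Real.mul_rpow (abs_nonneg x) (norm_nonneg _)]
    calc |x| ^ (-α) * (‖(x:ℂ) - d‖) ^ (-α)
        ≤ |x| ^ (-α) * ((|x - s| / Real.sqrt 2) ^ (-α)) :=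
          mul_le_mul_of_nonneg_left h2 (rpow_nonneg (abs_nonneg _) _)
      _ = (Real.sqrt 2) ^ α * (|x| ^ (-α) * |x - s| ^ (-α)) := by rw [h3]; ring
  obtain ⟨hint, hval⟩ := mainReal' α hα hα1 s hsne
  rw [hsabs] at hval
  have hae : ∀ᵐ x : ℝ ∂(volume.restrict (Icc (-1:ℝ) 1)),
      (‖(x : ℂ) * ((x : ℂ) - d)‖) ^ (-α)
        ≤ (Real.sqrt 2) ^ α * (|x| ^ (-α) * |x - s| ^ (-α)) := by
    apply ae_restrict_of_ae
    rw [ae_iff]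
    apply measure_mono_null _ (Real.volume_singleton (a := s))
    intro x hx
    simp only [mem_setOf_eq] at hx
    by_contra hmem
    exact hx (hpt x (by simpa using hmem))
  have hInt2 : Integrable (fun x : ℝ => (Real.sqrt 2) ^ α * (|x| ^ (-α) * |x - s| ^ (-α)))
      (volume.restrict (Icc (-1:ℝ) 1)) := hint.const_mul _
  calc ∫ x in Icc (-1:ℝ) 1, (‖(x : ℂ) * ((x : ℂ) - d)‖) ^ (-α)
      ≤ ∫ x in Icc (-1:ℝ) 1, (Real.sqrt 2) ^ α * (|x| ^ (-α) * |x - s| ^ (-α)) :=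
        integral_mono_of_nonneg
          (Filter.Eventually.of_forall (fun x => rpow_nonneg (norm_nonneg _) _))
          hInt2 hae
    _ = (Real.sqrt 2) ^ α * ∫ x in Icc (-1:ℝ) 1, |x| ^ (-α) * |x - s| ^ (-α) :=
        integral_const_mul _ _
    _ ≤ (Real.sqrt 2) ^ α * (Kc α * r ^ (-(2*α - 1))) :=
        mul_le_mul_of_nonneg_left hval (rpow_nonneg (Real.sqrt_nonneg 2) _)
    _ = (Real.sqrt 2) ^ α * Kc α * r ^ (-(2*α - 1)) := by ring
end

section
/- Let g(x) = (cos x + E)(cos(x − θ) + E) for E ∈ (−1/2, 1/2) and θ ∈ (−π, π] with θ bounded away from 0 and ±2 arccos(−E) by a distance η > 0. Then there exist constants c(η) > 0 such that the four zeros of g on [−π, π] (namely ±x* and ±x* + θ mod 2π, with x* = arccos(−E)) are pairwise separated by at least c(η), and consequently ∫_{−π}^{π} |g(x)|^{-α} dx ≤ C(η, α) for every α ∈ (0, 1). -/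
open Real MeasureTheory

/-- distance to nearest multiple of 2π, via round -/
noncomputable def dst (u : ℝ) : ℝ := |u - 2 * π * round (u / (2 * π))|

lemma dst_le_pi (u : ℝ) : dst u ≤ π := by
  have h := abs_sub_round (u / (2 * π))
  have hπ : (0:ℝ) < 2 * π := by positivity
  have he : u - 2 * π * round (u / (2*π)) = (u / (2*π) - round (u / (2*π))) * (2*π) := by
    field_simp
  rw [dst, he, abs_mul, abs_of_pos hπ]
  nlinarith [abs_nonneg (u / (2*π) - (round (u / (2*π)) : ℝ))]

lemma sin_half_ge (u : ℝ) : dst u / π ≤ |Real.sin (u / 2)| := by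
  set k : ℤ := round (u / (2 * π)) with hk
  have hd : dst u = |u - 2 * π * k| := rfl
  have hdle : dst u ≤ π := dst_le_pi u
  have h1 : Real.sin (u / 2) = (-1 : ℝ) ^ k * Real.sin ((u - 2*π*k)/2) := by
    have := Real.sin_add_int_mul_pi ((u - 2*π*k)/2) k
    rw [show (u - 2*π*k)/2 + k * π = u / 2 by ring] at this
    rw [this]
  have h2 : |Real.sin (u/2)| = |Real.sin ((u - 2*π*k)/2)| := by
    have habs : |((-1:ℝ)) ^ k| = 1 := by
      rcases Int.even_or_odd k with h | h
      · rw [h.neg_one_zpow]; simp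
      · rw [Odd.neg_one_zpow h]; simp
    rw [h1, abs_mul, habs, one_mul]
  rw [h2, hd]
  have h3 : |(u - 2*π*k)/2| ≤ π / 2 := by
    rw [abs_div, abs_two]
    have : |u - 2*π*k| ≤ π := hdle
    linarith
  have := Real.mul_abs_le_abs_sin h3
  calc |u - 2*π*k| / π = 2/π * |(u - 2*π*k)/2| := by
        rw [abs_div, abs_two]; field_simp
    _ ≤ |Real.sin ((u - 2*π*k)/2)| := this

lemma intAbs (r : ℝ) (hr : -1 < r) : ∀ a b : ℝ, IntervalIntegrable (fun x => |x| ^ r) volume a b := by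
  have h0 : ∀ b : ℝ, 0 ≤ b → IntervalIntegrable (fun x => |x| ^ r) volume 0 b := by
    intro b hb
    have h1 : IntervalIntegrable (fun x : ℝ => x ^ r) volume 0 b :=
      intervalIntegral.intervalIntegrable_rpow' hr
    rw [intervalIntegrable_iff_integrableOn_Ioc_of_le hb] at h1 ⊢
    exact h1.congr_fun (fun x hx => by rw [abs_of_pos hx.1]) measurableSet_Ioc
  have h0' : ∀ b : ℝ, IntervalIntegrable (fun x => |x| ^ r) volume 0 b := by
    intro b
    rcases le_or_gt 0 b with hb | hb
    · exact h0 b hb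
    · have := (h0 (-b) (by linarith))
      have h2 := (IntervalIntegrable.iff_comp_neg (by simp)).mp this
      simpa using h2
  intro a b
  exact (h0' a).symm.trans (h0' b)

lemma intAbsShift (r : ℝ) (hr : -1 < r) (w a b : ℝ) :
    IntervalIntegrable (fun x => |x - w| ^ r) volume a b := by
  simpa using (intAbs r hr (a - w) (b - w)).comp_sub_right w

lemma absShiftVal (α : ℝ) (hα : α ∈ Set.Ioo (0:ℝ) 1) (w : ℝ) (hw : |w| ≤ 5 * π) :
    (∫ x in (-π)..π, |x - w| ^ (-α)) ≤ 2 * (6*π) ^ (1 - α) / (1 - α) := by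
  obtain ⟨hα0, hα1⟩ := hα
  have hπ := Real.pi_pos
  have hr : (-1 : ℝ) < -α := by linarith
  have h1 : (∫ x in (-π)..π, |x - w| ^ (-α)) = ∫ x in (-π - w)..(π - w), |x| ^ (-α) := by
    rw [← intervalIntegral.integral_comp_sub_right (fun x => |x| ^ (-α)) w]
  have habs : |w| ≤ 5 * π := hw
  have h2 : (∫ x in (-π - w)..(π - w), |x| ^ (-α)) ≤ ∫ x in (-(6*π))..(6*π), |x| ^ (-α) := by
    apply intervalIntegral.integral_mono_interval (by cases abs_le.mp habs; linarith)
      (by linarith) (by cases abs_le.mp habs; linarith)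
    · filter_upwards with x
      exact Real.rpow_nonneg (abs_nonneg x) _
    · exact intAbs _ hr _ _
  have h3 : (∫ x in (-(6*π))..(6*π), |x| ^ (-α)) = 2 * ((6*π) ^ (1 - α) / (1 - α)) := by
    have hsplit : (∫ x in (-(6*π))..(6*π), |x| ^ (-α))
        = (∫ x in (-(6*π))..(0:ℝ), |x| ^ (-α)) + ∫ x in (0:ℝ)..(6*π), |x| ^ (-α) :=
      (intervalIntegral.integral_add_adjacent_intervals (intAbs _ hr _ _) (intAbs _ hr _ _)).symm
    have hneg : (∫ x in (-(6*π))..(0:ℝ), |x| ^ (-α)) = ∫ x in (0:ℝ)..(6*π), |x| ^ (-α) := by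
      have := intervalIntegral.integral_comp_neg (a := (0:ℝ)) (b := 6*π) (fun x => |x| ^ (-α))
      simp only [abs_neg, neg_zero] at this
      rw [← this]
    have hval : (∫ x in (0:ℝ)..(6*π), |x| ^ (-α)) = (6*π) ^ (1 - α) / (1 - α) := by
      have hcongr : (∫ x in (0:ℝ)..(6*π), |x| ^ (-α)) = ∫ x in (0:ℝ)..(6*π), x ^ (-α) := by
        apply intervalIntegral.integral_congr
        intro x hx
        rw [Set.uIcc_of_le (by positivity)] at hx
        show |x| ^ (-α) = x ^ (-α); rw [abs_of_nonneg hx.1]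
      rw [hcongr, integral_rpow (Or.inl hr)]
      rw [Real.zero_rpow (by linarith), show -α + 1 = 1 - α by ring]
      ring
    rw [hsplit, hneg, hval]; ring
  rw [h1]
  calc (∫ x in (-π - w)..(π - w), |x| ^ (-α)) ≤ _ := h2
    _ = 2 * ((6*π) ^ (1-α) / (1-α)) := h3
    _ = 2 * (6*π) ^ (1-α) / (1-α) := by ring

set_option maxHeartbeats 2000000

lemma prod3 {a b c e : ℝ} (he : 0 ≤ e) (h1 : e ≤ a) (h2 : e ≤ b) (h3 : e ≤ c) :
    e^3 ≤ a*b*c := by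
  have hab : e^2 ≤ a*b := by nlinarith
  have h := mul_le_mul hab h3 he ((pow_nonneg he 2).trans hab)
  nlinarith [h]

lemma dst_zero_sin {u : ℝ} (h : dst u = 0) : Real.sin (u / 2) = 0 := by
  have h0 : u - 2*π*round (u/(2*π)) = 0 := abs_eq_zero.mp h
  have hu : u = 2*π*round (u/(2*π)) := by linarith
  rw [hu, show (2*π*((round (u/(2*π)) : ℤ):ℝ))/2 = ((round (u/(2*π)) : ℤ):ℝ)*π by ring]
  exact Real.sin_int_mul_pi _

lemma le_abs_match {c X Y : ℝ} (h : c ≤ |X|) (e : Y = X ∨ Y = -X) : c ≤ |Y| := by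
  rcases e with rfl | rfl
  · exact h
  · rwa [abs_neg]

theorem stmt_12 (η α : ℝ) (hη : 0 < η) (hα : α ∈ Set.Ioo (0 : ℝ) 1) :
    ∃ c > 0, ∃ C : ℝ,
      ∀ E ∈ Set.Ioo (-(1 / 2) : ℝ) (1 / 2), ∀ θ ∈ Set.Ioc (-π) π,
        (∀ s ∈ ({0, 2 * Real.arccos (-E), -(2 * Real.arccos (-E))} : Set ℝ),
            ∀ k : ℤ, η ≤ |θ - (s + 2 * π * k)|) →
        ((∀ i j : Fin 4, i ≠ j → ∀ k : ℤ,
            c ≤ |(![Real.arccos (-E), -Real.arccos (-E),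
                    Real.arccos (-E) + θ, -Real.arccos (-E) + θ] i) -
                 (![Real.arccos (-E), -Real.arccos (-E),
                    Real.arccos (-E) + θ, -Real.arccos (-E) + θ] j) - 2 * π * k|) ∧
          ∫ x in Set.Icc (-π) π,
            |(Real.cos x + E) * (Real.cos (x - θ) + E)| ^ (-α) ≤ C) := by
  obtain ⟨hα0, hα1⟩ := hα
  have hπ := Real.pi_pos
  have hrα : (-1:ℝ) < -α := by linarith
  set c := min η (2*π/3) with hcdef
  have hc0 : 0 < c := lt_min hη (by positivity)
  have hcπ : c ≤ 2*π/3 := min_le_right _ _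
  have hcη : c ≤ η := min_le_left _ _
  set K : ℝ := 4/π^4 * (c/2)^3 with hKdef
  have hK0 : 0 < K := by positivity
  set V : ℝ := 2*(6*π)^(1-α)/(1-α) with hVdef
  refine ⟨c, hc0, K^(-α) * (12 * V), ?_⟩
  rintro E ⟨hE1, hE2⟩ θ ⟨hθ1, hθ2⟩ hsep
  set xs := Real.arccos (-E) with hxs
  have hcos : Real.cos xs = -E := Real.cos_arccos (by linarith) (by linarith)
  have harc13 : Real.arccos (1/2) = π/3 := by
    rw [← Real.cos_pi_div_three]; exact Real.arccos_cos (by positivity) (by linarith)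
  have hxlo : π/3 < xs := by
    rw [← harc13]
    exact Real.strictAntiOn_arccos ⟨by linarith, by linarith⟩ ⟨by norm_num, by norm_num⟩
      (by linarith)
  have hxhi : xs < 2*π/3 := by
    have h23 : Real.arccos (-(1/2)) = 2*π/3 := by
      rw [show -(1/2 : ℝ) = Real.cos (2*π/3) by
        rw [show 2*π/3 = π - π/3 by ring, Real.cos_pi_sub, Real.cos_pi_div_three]]
      exact Real.arccos_cos (by positivity) (by linarith)
    rw [← h23]
    exact Real.strictAntiOn_arccos ⟨by norm_num, by norm_num⟩ ⟨by linarith, by linarith⟩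
      (by linarith)
  have hB : ∀ k : ℤ, η ≤ |θ - 2*π*k| := by
    intro k; have := hsep 0 (by simp) k; simpa using this
  have hC : ∀ k : ℤ, η ≤ |θ - 2*xs - 2*π*k| := by
    intro k; have := hsep (2*xs) (by simp [hxs]) k
    exact le_abs_match this (Or.inl (by ring))
  have hD : ∀ k : ℤ, η ≤ |θ + 2*xs - 2*π*k| := by
    intro k; have := hsep (-(2*xs)) (by simp [hxs]) k
    exact le_abs_match this (Or.inl (by ring))
  have hA : ∀ k : ℤ, 2*π/3 ≤ |2*xs - 2*π*k| := by
    intro k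
    rcases le_or_gt k 0 with hk | hk
    · have hk' : (k:ℝ) ≤ 0 := by exact_mod_cast hk
      rw [le_abs]; left; nlinarith
    · have hk' : (1:ℝ) ≤ (k:ℝ) := by exact_mod_cast hk
      rw [le_abs]; right; nlinarith
  set v : Fin 4 → ℝ := ![xs, -xs, xs + θ, -xs + θ] with hv
  have key1 : ∀ i j : Fin 4, i ≠ j → ∀ k : ℤ, c ≤ |v i - v j - 2*π*k| := by
    intro i j hij k
    fin_cases i <;> fin_cases j
    · exact absurd rfl hij
    · show c ≤ |xs - -xs - 2*π*(k:ℤ)|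
      exact le_abs_match (hcπ.trans (hA k)) (Or.inl (by push_cast; ring))
    · show c ≤ |xs - (xs + θ) - 2*π*(k:ℤ)|
      exact le_abs_match (hcη.trans (hB (-k))) (Or.inr (by push_cast; ring))
    · show c ≤ |xs - (-xs + θ) - 2*π*(k:ℤ)|
      exact le_abs_match (hcη.trans (hC (-k))) (Or.inr (by push_cast; ring))
    · show c ≤ |-xs - xs - 2*π*(k:ℤ)|
      exact le_abs_match (hcπ.trans (hA (-k))) (Or.inr (by push_cast; ring))
    · exact absurd rfl hij
    · show c ≤ |-xs - (xs + θ) - 2*π*(k:ℤ)|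
      exact le_abs_match (hcη.trans (hD (-k))) (Or.inr (by push_cast; ring))
    · show c ≤ |-xs - (-xs + θ) - 2*π*(k:ℤ)|
      exact le_abs_match (hcη.trans (hB (-k))) (Or.inr (by push_cast; ring))
    · show c ≤ |xs + θ - xs - 2*π*(k:ℤ)|
      exact le_abs_match (hcη.trans (hB k)) (Or.inl (by push_cast; ring))
    · show c ≤ |xs + θ - -xs - 2*π*(k:ℤ)|
      exact le_abs_match (hcη.trans (hD k)) (Or.inl (by push_cast; ring))
    · exact absurd rfl hij
    · show c ≤ |xs + θ - (-xs + θ) - 2*π*(k:ℤ)|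
      exact le_abs_match (hcπ.trans (hA k)) (Or.inl (by push_cast; ring))
    · show c ≤ |-xs + θ - xs - 2*π*(k:ℤ)|
      exact le_abs_match (hcη.trans (hC k)) (Or.inl (by push_cast; ring))
    · show c ≤ |-xs + θ - -xs - 2*π*(k:ℤ)|
      exact le_abs_match (hcη.trans (hB k)) (Or.inl (by push_cast; ring))
    · show c ≤ |-xs + θ - (xs + θ) - 2*π*(k:ℤ)|
      exact le_abs_match (hcπ.trans (hA (-k))) (Or.inr (by push_cast; ring))
    · exact absurd rfl hij
  refine ⟨key1, ?_⟩
  have hvbound : ∀ i : Fin 4, |v i| ≤ 5*π/3 := by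
    intro i
    fin_cases i
    · show |xs| ≤ 5*π/3
      rw [abs_le]; constructor <;> linarith
    · show |-xs| ≤ 5*π/3
      rw [abs_neg, abs_le]; constructor <;> linarith
    · show |xs + θ| ≤ 5*π/3
      rw [abs_le]; constructor <;> linarith
    · show |-xs + θ| ≤ 5*π/3
      rw [abs_le]; constructor <;> linarith
  set w : Fin 4 × Fin 3 → ℝ := fun p => v p.1 + 2*π*(((p.2 : ℕ) : ℝ) - 1) with hw
  have hwbound : ∀ p, |w p| ≤ 5*π := by
    intro p
    have h2 : ((p.2 : ℕ) : ℝ) ≤ 2 := by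
      have := p.2.isLt
      exact_mod_cast Nat.lt_succ_iff.mp this
    have h0 : (0:ℝ) ≤ ((p.2 : ℕ) : ℝ) := by positivity
    have hvb := hvbound p.1
    rw [abs_le] at hvb
    have hp1 : 2*π*(((p.2:ℕ):ℝ) - 1) ≤ 2*π := by nlinarith
    have hp2 : -(2*π) ≤ 2*π*(((p.2:ℕ):ℝ) - 1) := by nlinarith
    have hwp : w p = v p.1 + 2*π*(((p.2:ℕ):ℝ) - 1) := rfl
    rw [abs_le, hwp]
    constructor <;> linarith [hvb.1, hvb.2]
  have hTint : ∀ p : Fin 4 × Fin 3,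
      IntegrableOn (fun x => |x - w p| ^ (-α)) (Set.Icc (-π) π) volume := by
    intro p
    rw [integrableOn_Icc_iff_integrableOn_Ioc]
    exact (intAbsShift (-α) hrα (w p) (-π) π).1
  have hHint : IntegrableOn
      (fun x => K^(-α) * ∑ p : Fin 4 × Fin 3, |x - w p| ^ (-α)) (Set.Icc (-π) π) volume := by
    exact (integrable_finset_sum _ (fun p _ => hTint p)).const_mul _
  have pointwise : ∀ x ∈ Set.Icc (-π) π,
      |(Real.cos x + E) * (Real.cos (x - θ) + E)| ^ (-α)
        ≤ K^(-α) * ∑ p : Fin 4 × Fin 3, |x - w p| ^ (-α) := by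
    intro x hx
    have e1 : Real.cos x + E = -2 * Real.sin ((x - v 1)/2) * Real.sin ((x - v 0)/2) := by
      have h' : Real.cos x + E = Real.cos x - Real.cos xs := by rw [hcos]; ring
      rw [h', Real.cos_sub_cos]
      have hv0 : v 0 = xs := rfl
      have hv1 : v 1 = -xs := rfl
      rw [hv0, hv1]
      ring_nf
    have e2 : Real.cos (x - θ) + E = -2 * Real.sin ((x - v 3)/2) * Real.sin ((x - v 2)/2) := by
      have h' : Real.cos (x - θ) + E = Real.cos (x - θ) - Real.cos xs := by rw [hcos]; ring
      rw [h', Real.cos_sub_cos]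
      have hv2 : v 2 = xs + θ := rfl
      have hv3 : v 3 = -xs + θ := rfl
      rw [hv2, hv3]
      ring_nf
    have hgfact : |(Real.cos x + E) * (Real.cos (x - θ) + E)|
        = 4 * ∏ i : Fin 4, |Real.sin ((x - v i)/2)| := by
      rw [e1, e2]
      simp only [Fin.prod_univ_four, abs_mul, abs_neg, abs_two]
      ring
    set d : Fin 4 → ℝ := fun i => dst (x - v i) with hd
    have hd0 : ∀ i, 0 ≤ d i := fun i => abs_nonneg _
    have hsin : ∀ i, d i / π ≤ |Real.sin ((x - v i)/2)| := fun i => sin_half_ge _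
    obtain ⟨i0, hi0⟩ : ∃ i0 : Fin 4, ∀ j, j ≠ i0 → c/2 ≤ d j := by
      by_cases hall : ∀ j, c/2 ≤ d j
      · exact ⟨0, fun j _ => hall j⟩
      · push_neg at hall
        obtain ⟨i1, hi1⟩ := hall
        refine ⟨i1, fun j hj => ?_⟩
        by_contra hlt
        push_neg at hlt
        have hsep' := key1 j i1 hj (round ((x - v i1)/(2*π)) - round ((x - v j)/(2*π)))
        have htri : |v j - v i1 - 2*π*((round ((x - v i1)/(2*π)) - round ((x - v j)/(2*π)) : ℤ):ℝ)|
            ≤ d i1 + d j := by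
          have h1 : v j - v i1 - 2*π*((round ((x - v i1)/(2*π)) - round ((x - v j)/(2*π)) : ℤ):ℝ)
              = (x - v i1 - 2*π*(round ((x - v i1)/(2*π)) : ℤ))
                - (x - v j - 2*π*(round ((x - v j)/(2*π)) : ℤ)) := by push_cast; ring
          rw [h1]
          exact abs_sub _ _
        linarith [hsep', htri]
    by_cases hz : d i0 = 0
    · have hs0 : Real.sin ((x - v i0)/2) = 0 := dst_zero_sin hz
      have hzero : |(Real.cos x + E) * (Real.cos (x - θ) + E)| = 0 := by
        rw [hgfact]
        have hp : ∏ i : Fin 4, |Real.sin ((x - v i)/2)| = 0 :=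
          Finset.prod_eq_zero (Finset.mem_univ i0) (by rw [hs0, abs_zero])
        rw [hp, mul_zero]
      rw [hzero, Real.zero_rpow (neg_ne_zero.mpr (ne_of_gt hα0))]
      exact mul_nonneg (Real.rpow_nonneg hK0.le _)
        (Finset.sum_nonneg fun p _ => Real.rpow_nonneg (abs_nonneg _) _)
    · have hdi0 : 0 < d i0 := (hd0 i0).lt_of_ne (Ne.symm hz)
      have hc2 : (0:ℝ) ≤ c/2 := by linarith
      have hprodd : (c/2)^3 * d i0 ≤ d 0 * d 1 * d 2 * d 3 := by
        fin_cases i0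
        · show (c/2)^3 * d 0 ≤ d 0 * d 1 * d 2 * d 3
          have h3 := prod3 hc2 (hi0 1 (by decide)) (hi0 2 (by decide)) (hi0 3 (by decide))
          calc (c/2)^3 * d 0 ≤ (d 1 * d 2 * d 3) * d 0 :=
                mul_le_mul_of_nonneg_right h3 (hd0 0)
            _ = d 0 * d 1 * d 2 * d 3 := by ring
        · show (c/2)^3 * d 1 ≤ d 0 * d 1 * d 2 * d 3
          have h3 := prod3 hc2 (hi0 0 (by decide)) (hi0 2 (by decide)) (hi0 3 (by decide))
          calc (c/2)^3 * d 1 ≤ (d 0 * d 2 * d 3) * d 1 :=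
                mul_le_mul_of_nonneg_right h3 (hd0 1)
            _ = d 0 * d 1 * d 2 * d 3 := by ring
        · show (c/2)^3 * d 2 ≤ d 0 * d 1 * d 2 * d 3
          have h3 := prod3 hc2 (hi0 0 (by decide)) (hi0 1 (by decide)) (hi0 3 (by decide))
          calc (c/2)^3 * d 2 ≤ (d 0 * d 1 * d 3) * d 2 :=
                mul_le_mul_of_nonneg_right h3 (hd0 2)
            _ = d 0 * d 1 * d 2 * d 3 := by ring
        · show (c/2)^3 * d 3 ≤ d 0 * d 1 * d 2 * d 3
          have h3 := prod3 hc2 (hi0 0 (by decide)) (hi0 1 (by decide)) (hi0 2 (by decide))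
          calc (c/2)^3 * d 3 ≤ (d 0 * d 1 * d 2) * d 3 :=
                mul_le_mul_of_nonneg_right h3 (hd0 3)
            _ = d 0 * d 1 * d 2 * d 3 := by ring
      have hglower : K * d i0 ≤ |(Real.cos x + E) * (Real.cos (x - θ) + E)| := by
        rw [hgfact]
        simp only [Fin.prod_univ_four]
        have s0 := hsin 0
        have s1 := hsin 1
        have s2 := hsin 2
        have s3 := hsin 3
        have hn : ∀ i : Fin 4, 0 ≤ d i / π := fun i => div_nonneg (hd0 i) hπ.le
        have habs : ∀ i : Fin 4, (0:ℝ) ≤ |Real.sin ((x - v i)/2)| := fun i => abs_nonneg _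
        have hstep : (d 0/π)*(d 1/π)*(d 2/π)*(d 3/π)
            ≤ |Real.sin ((x - v 0)/2)| * |Real.sin ((x - v 1)/2)|
              *|Real.sin ((x - v 2)/2)| * |Real.sin ((x - v 3)/2)| := by
          apply mul_le_mul (mul_le_mul (mul_le_mul s0 s1 (hn 1) (habs 0)) s2 (hn 2)
            (mul_nonneg (habs 0) (habs 1))) s3 (hn 3)
            (mul_nonneg (mul_nonneg (habs 0) (habs 1)) (habs 2))
        calc K * d i0 = 4/π^4 * ((c/2)^3 * d i0) := by rw [hKdef]; ring
          _ ≤ 4/π^4 * (d 0 * d 1 * d 2 * d 3) :=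
              mul_le_mul_of_nonneg_left hprodd (by positivity)
          _ = 4 * ((d 0/π)*(d 1/π)*(d 2/π)*(d 3/π)) := by
              rw [div_mul_div_comm, div_mul_div_comm, div_mul_div_comm, mul_div_assoc]
              ring_nf
          _ ≤ 4 * (|Real.sin ((x - v 0)/2)| * |Real.sin ((x - v 1)/2)|
              *|Real.sin ((x - v 2)/2)| * |Real.sin ((x - v 3)/2)|) := by linarith [hstep]
      have hfle : |(Real.cos x + E) * (Real.cos (x - θ) + E)| ^ (-α) ≤ (K * d i0) ^ (-α) :=
        Real.rpow_le_rpow_of_nonpos (mul_pos hK0 hdi0) hglower (by linarith)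
      have hxabs : |x| ≤ π := abs_le.mpr ⟨hx.1, hx.2⟩
      have hxvb : |x - v i0| ≤ 8*π/3 := by
        calc |x - v i0| ≤ |x| + |v i0| := abs_sub _ _
          _ ≤ π + 5*π/3 := add_le_add hxabs (hvbound i0)
          _ = 8*π/3 := by ring
      set ri0 : ℤ := round ((x - v i0)/(2*π)) with hri0
      have hrd : |(x - v i0)/(2*π) - ri0| ≤ 1/2 := abs_sub_round _
      have htb : |(x - v i0)/(2*π)| ≤ 4/3 := by
        rw [abs_div, abs_of_pos (by positivity : (0:ℝ) < 2*π), div_le_iff₀ (by positivity)]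
        nlinarith
      have hrabs : |(ri0:ℝ)| < 2 := by
        calc |(ri0:ℝ)| = |(x - v i0)/(2*π) - ((x - v i0)/(2*π) - ri0)| := by ring_nf
          _ ≤ |(x - v i0)/(2*π)| + |(x - v i0)/(2*π) - ri0| := abs_sub _ _
          _ ≤ 4/3 + 1/2 := add_le_add htb hrd
          _ < 2 := by norm_num
      have hrint : ri0 = -1 ∨ ri0 = 0 ∨ ri0 = 1 := by
        have h2 : |ri0| < 2 := by exact_mod_cast (by rwa [← Int.cast_abs] at hrabs :
          ((|ri0| : ℤ):ℝ) < 2)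
        have h3 := abs_lt.mp h2
        omega
      obtain ⟨p2, hp2⟩ : ∃ p2 : Fin 3, ((p2:ℕ):ℝ) - 1 = (ri0:ℝ) := by
        rcases hrint with h | h | h
        · exact ⟨0, by rw [h]; norm_num⟩
        · exact ⟨1, by rw [h]; norm_num⟩
        · exact ⟨2, by rw [h]; norm_num⟩
      have hterm : d i0 = |x - w (i0, p2)| := by
        have hw2 : w (i0, p2) = v i0 + 2*π*(ri0:ℝ) := by
          have hww : w (i0, p2) = v i0 + 2*π*(((p2:ℕ):ℝ) - 1) := rfl
          rw [hww, hp2]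
        rw [hw2]
        have hdi : d i0 = |x - v i0 - 2*π*(ri0:ℝ)| := rfl
        rw [hdi]
        exact congrArg abs (by ring)
      have hsum : |x - w (i0,p2)| ^ (-α) ≤ ∑ p : Fin 4 × Fin 3, |x - w p| ^ (-α) :=
        Finset.single_le_sum (f := fun p => |x - w p| ^ (-α))
          (fun p _ => Real.rpow_nonneg (abs_nonneg _) _) (Finset.mem_univ (i0, p2))
      calc |(Real.cos x + E) * (Real.cos (x - θ) + E)| ^ (-α)
          ≤ (K * d i0) ^ (-α) := hfle
        _ = K^(-α) * d i0 ^ (-α) := Real.mul_rpow hK0.le (hd0 i0)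
        _ = K^(-α) * |x - w (i0,p2)| ^ (-α) := by rw [hterm]
        _ ≤ K^(-α) * ∑ p : Fin 4 × Fin 3, |x - w p| ^ (-α) :=
            mul_le_mul_of_nonneg_left hsum (Real.rpow_nonneg hK0.le _)
  have hmeas : Measurable (fun x => |(Real.cos x + E) * (Real.cos (x - θ) + E)| ^ (-α)) := by
    have hgc : Continuous (fun x : ℝ => (Real.cos x + E) * (Real.cos (x - θ) + E)) := by
      continuity
    have h := hgc.measurable
    measurability
  have hfint : IntegrableOn (fun x => |(Real.cos x + E) * (Real.cos (x - θ) + E)| ^ (-α))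
      (Set.Icc (-π) π) volume := by
    apply Integrable.mono' hHint hmeas.aestronglyMeasurable
    filter_upwards [ae_restrict_mem measurableSet_Icc] with x hx
    rw [Real.norm_eq_abs, abs_of_nonneg (Real.rpow_nonneg (abs_nonneg _) _)]
    exact pointwise x hx
  have heach : ∀ p : Fin 4 × Fin 3, (∫ x in Set.Icc (-π) π, |x - w p| ^ (-α)) ≤ V := by
    intro p
    rw [MeasureTheory.integral_Icc_eq_integral_Ioc,
      ← intervalIntegral.integral_of_le (by linarith : -π ≤ π)]
    rw [hVdef]
    exact absShiftVal α ⟨hα0, hα1⟩ (w p) (hwbound p)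
  calc ∫ x in Set.Icc (-π) π, |(Real.cos x + E) * (Real.cos (x - θ) + E)| ^ (-α)
      ≤ ∫ x in Set.Icc (-π) π, K^(-α) * ∑ p : Fin 4 × Fin 3, |x - w p| ^ (-α) :=
        setIntegral_mono_on hfint hHint measurableSet_Icc pointwise
    _ = K^(-α) * ∑ p : Fin 4 × Fin 3, ∫ x in Set.Icc (-π) π, |x - w p| ^ (-α) := by
        rw [MeasureTheory.integral_const_mul,
          MeasureTheory.integral_finset_sum _ (fun p _ => hTint p)]
    _ ≤ K^(-α) * (12 * V) := by
        refine mul_le_mul_of_nonneg_left ?_ (Real.rpow_nonneg hK0.le _)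
        calc ∑ p : Fin 4 × Fin 3, ∫ x in Set.Icc (-π) π, |x - w p| ^ (-α)
            ≤ ∑ _p : Fin 4 × Fin 3, V := Finset.sum_le_sum (fun p _ => heach p)
          _ = 12 * V := by
              simp [Finset.sum_const, Finset.card_univ, Fintype.card_prod, nsmul_eq_mul]
end

section
/- Fix a ∈ (π/3, 2π/3) (playing the role of x* = arccos(−E)). For θ ∈ ℝ with |θ| small, consider g(x) = (cos x + E)(cos(x − θ) + E) with E = −cos a. Then the two zeros x* and x* + θ of g near x* satisfy |x* + θ − x*| = |θ|, and for 1/2 < α < 1, ∫_{x* − 1}^{x* + 1} |g(x)|^{-α} dx ≤ C_α |θ|^{-(2α−1)} for a constant C_α depending only on α and a lower bound on sin a. -/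
open Real MeasureTheory
open Set

lemma aux_abs_rpow_ii {p : ℝ} (hp : -1 < p) (c a b : ℝ) :
    IntervalIntegrable (fun x => |x - c| ^ p) volume a b := by
  have base : ∀ d : ℝ, 0 ≤ d → IntervalIntegrable (fun x => |x| ^ p) volume 0 d := by
    intro d hd
    rw [intervalIntegrable_iff, uIoc_of_le hd]
    refine (intervalIntegral.intervalIntegrable_rpow' hp (a := 0) (b := d)).1.congr_fun
      (fun x hx => ?_) measurableSet_Ioc
    rw [abs_of_pos hx.1]
  have base2 : ∀ d : ℝ, IntervalIntegrable (fun x => |x| ^ p) volume 0 d := by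
    intro d
    rcases le_total 0 d with hd | hd
    · exact base d hd
    · have h2 := (IntervalIntegrable.iff_comp_neg (f := fun x => |x| ^ p) (a := 0)
        (b := -d)).mp (base (-d) (by linarith))
      simp only [abs_neg, neg_zero, neg_neg] at h2
      exact h2
  have h3 : IntervalIntegrable (fun x => |x| ^ p) volume (a - c) (b - c) :=
    (base2 (a - c)).symm.trans (base2 (b - c))
  simpa using h3.comp_sub_right c

lemma aux_zero_ii {p : ℝ} (hp : -1 < p) (a b : ℝ) :
    IntervalIntegrable (fun x => |x| ^ p) volume a b := by
  simpa using aux_abs_rpow_ii hp 0 a b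

lemma aux_abs_rpow_integral {p : ℝ} (hp : -1 < p) {t : ℝ} (ht : 0 ≤ t) (c : ℝ) :
    ∫ x in Icc (c - t) (c + t), |x - c| ^ p = 2 * (t ^ (p + 1) / (p + 1)) := by
  have hle : c - t ≤ c + t := by linarith
  rw [integral_Icc_eq_integral_Ioc, ← intervalIntegral.integral_of_le hle]
  have h1 : (∫ x in (c - t)..(c + t), |x - c| ^ p) = ∫ x in (-t)..t, |x| ^ p := by
    have := intervalIntegral.integral_comp_sub_right (a := c - t) (b := c + t)
      (fun y => |y| ^ p) c
    simpa using this
  rw [h1]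
  have hsplit : (∫ x in (-t)..(0:ℝ), |x| ^ p) + (∫ x in (0:ℝ)..t, |x| ^ p)
      = ∫ x in (-t)..t, |x| ^ p :=
    intervalIntegral.integral_add_adjacent_intervals (aux_zero_ii hp _ _) (aux_zero_ii hp _ _)
  have hneg : (∫ x in (-t)..(0:ℝ), |x| ^ p) = ∫ x in (0:ℝ)..t, |x| ^ p := by
    have := intervalIntegral.integral_comp_neg (a := (0:ℝ)) (b := t) (fun y => |y| ^ p)
    simpa using this.symm
  have hpos : (∫ x in (0:ℝ)..t, |x| ^ p) = t ^ (p + 1) / (p + 1) := by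
    rw [intervalIntegral.integral_congr (g := fun x => x ^ p) ?_]
    · rw [integral_rpow (Or.inl hp), Real.zero_rpow (by linarith), sub_zero]
    · intro x hx
      rw [uIcc_of_le ht] at hx
      simp [abs_of_nonneg hx.1]
  rw [← hsplit, hneg, hpos]; ring

lemma aux_max_cont {t q : ℝ} (ht : 0 < t) (c : ℝ) :
    Continuous (fun x : ℝ => (max |x - c| t) ^ q) := by
  refine Continuous.rpow_const ?_ (fun x => Or.inl ?_)
  · exact ((continuous_id.sub continuous_const).abs.max continuous_const)
  · exact ne_of_gt (lt_of_lt_of_le ht (le_max_right _ _))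

lemma aux_max_integral {a t R c : ℝ} (ht : 0 < t) (htR : t ≤ R)
    (ha1 : 1/2 < a) (ha2 : a < 1) :
    ∫ x in Icc (c - R) (c + R), (max |x - c| t) ^ (-(2*a))
      ≤ (2 + 2/(2*a-1)) * t ^ (1 - 2*a) := by
  have hcont := aux_max_cont (q := -(2*a)) ht c
  have hii : ∀ u v : ℝ, IntervalIntegrable (fun x => (max |x - c| t) ^ (-(2*a))) volume u v :=
    fun u v => hcont.intervalIntegrable u v
  have hle1 : c - R ≤ c - t := by linarith
  have hle2 : c - t ≤ c + t := by linarith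
  have hle3 : c + t ≤ c + R := by linarith
  rw [integral_Icc_eq_integral_Ioc, ← intervalIntegral.integral_of_le (by linarith)]
  rw [← intervalIntegral.integral_add_adjacent_intervals (a := c - R) (b := c - t)
    (c := c + R) (hii _ _) (hii _ _),
    ← intervalIntegral.integral_add_adjacent_intervals (a := c - t) (b := c + t)
    (c := c + R) (hii _ _) (hii _ _)]
  have hE : (0:ℝ) < t ^ (1 - 2*a) := Real.rpow_pos_of_pos ht _
  have hRE : (0:ℝ) ≤ R ^ (1 - 2*a) := Real.rpow_nonneg (by linarith) _
  have h2a : (0:ℝ) < 2*a - 1 := by linarith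
  -- middle piece
  have hmid : (∫ x in (c - t)..(c + t), (max |x - c| t) ^ (-(2*a))) = 2 * t ^ (1 - 2*a) := by
    rw [intervalIntegral.integral_congr (g := fun _ => t ^ (-(2*a)))
      (fun x hx => by
        rw [uIcc_of_le hle2] at hx
        rw [max_eq_right (abs_le.2 ⟨by linarith [hx.1], by linarith [hx.2]⟩)])]
    rw [intervalIntegral.integral_const, smul_eq_mul]
    rw [show (1 - 2*a) = 1 + (-(2*a)) by ring, Real.rpow_add ht, Real.rpow_one]
    ring
  -- right piece
  have hright : (∫ x in (c + t)..(c + R), (max |x - c| t) ^ (-(2*a)))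
      = (t ^ (1 - 2*a) - R ^ (1 - 2*a)) / (2*a - 1) := by
    rw [intervalIntegral.integral_congr (g := fun x => (x - c) ^ (-(2*a)))
      (fun x hx => by
        rw [uIcc_of_le (by linarith)] at hx
        have h1 : t ≤ x - c := by linarith [hx.1]
        rw [abs_of_nonneg (by linarith), max_eq_left (by linarith)])]
    rw [intervalIntegral.integral_comp_sub_right (fun y => y ^ (-(2*a))) c]
    have h0 : (0:ℝ) ∉ uIcc (c + t - c) (c + R - c) := by
      rw [show c + t - c = t by ring, show c + R - c = R by ring, uIcc_of_le htR]
      intro h; exact absurd h.1 (by linarith)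
    rw [integral_rpow (Or.inr ⟨by intro h; nlinarith [h], h0⟩)]
    rw [show c + t - c = t by ring, show c + R - c = R by ring,
      show -(2*a) + 1 = 1 - 2*a by ring]
    rw [div_eq_div_iff (by linarith) (by linarith)]
    ring
  -- left piece
  have hleft : (∫ x in (c - R)..(c - t), (max |x - c| t) ^ (-(2*a)))
      = (t ^ (1 - 2*a) - R ^ (1 - 2*a)) / (2*a - 1) := by
    rw [intervalIntegral.integral_congr (g := fun x => (c - x) ^ (-(2*a)))
      (fun x hx => by
        rw [uIcc_of_le hle1] at hx
        have h1 : t ≤ c - x := by linarith [hx.2]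
        rw [abs_of_nonpos (by linarith), max_eq_left (by linarith [h1]), neg_sub])]
    rw [intervalIntegral.integral_comp_sub_left (fun y => y ^ (-(2*a))) c]
    have h0 : (0:ℝ) ∉ uIcc (c - (c - t)) (c - (c - R)) := by
      rw [show c - (c - t) = t by ring, show c - (c - R) = R by ring, uIcc_of_le htR]
      intro h; exact absurd h.1 (by linarith)
    rw [integral_rpow (Or.inr ⟨by intro h; nlinarith [h], h0⟩)]
    rw [show c - (c - t) = t by ring, show c - (c - R) = R by ring,
      show -(2*a) + 1 = 1 - 2*a by ring]
    rw [div_eq_div_iff (by linarith) (by linarith)]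
    ring
  rw [hmid, hright, hleft]
  have key : (t ^ (1 - 2*a) - R ^ (1 - 2*a)) / (2*a - 1) ≤ t ^ (1 - 2*a) / (2*a-1) := by
    gcongr
    linarith
  have expand : (2 + 2/(2*a-1)) * t ^ (1-2*a)
      = 2 * t ^ (1-2*a) + 2 * (t ^ (1-2*a) / (2*a-1)) := by ring
  linarith

lemma aux_cos_lower {a y : ℝ} (ha : a ∈ Set.Ioo (π/3) (2*π/3)) (hy : |y - a| ≤ 101/100) :
    |y - a| / 5 ≤ |Real.cos y - Real.cos a| := by
  obtain ⟨ha1, ha2⟩ := ha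
  have hπ1 : (3.141592 : ℝ) < π := Real.pi_gt_d6
  have hπ2 : π < 3.141593 := Real.pi_lt_d6
  set w := (y + a) / 2 with hw
  set u := (y - a) / 2 with hu
  have hyu : |y - a| = 2 * |u| := by rw [hu, abs_div]; rw [abs_of_pos (by norm_num : (0:ℝ) < 2)]; ring
  have huabs : |u| ≤ 101/200 := by rw [hu, abs_div]; norm_num; linarith [hy]
  have hwl : a - 101/200 ≤ w := by
    have := abs_le.1 hy
    rw [hw]; linarith [this.1]
  have hwu : w ≤ a + 101/200 := by
    have := abs_le.1 hy
    rw [hw]; linarith [this.2]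
  set z₀ : ℝ := π/3 - 101/200 with hz₀
  have hz₀pos : 0 < z₀ := by rw [hz₀]; nlinarith
  have hsinw : 2/π * z₀ ≤ Real.sin w := by
    rcases le_total w (π/2) with hcase | hcase
    · have h1 : 2/π * w ≤ Real.sin w := Real.mul_le_sin (by nlinarith) hcase
      have h2 : 2/π * z₀ ≤ 2/π * w := by
        apply mul_le_mul_of_nonneg_left _ (by positivity)
        rw [hz₀]; linarith
      linarith
    · have hwπ : π - w ≤ π/2 := by linarith
      have h0 : 0 ≤ π - w := by nlinarith
      have h1 : 2/π * (π - w) ≤ Real.sin (π - w) := Real.mul_le_sin h0 hwπ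
      rw [Real.sin_pi_sub] at h1
      have h2 : 2/π * z₀ ≤ 2/π * (π - w) := by
        apply mul_le_mul_of_nonneg_left _ (by positivity)
        rw [hz₀]; linarith
      linarith
  have hsinu : 2/π * |u| ≤ |Real.sin u| := by
    apply Real.mul_abs_le_abs_sin
    nlinarith [huabs]
  have hAB : (2/π * z₀) * (2/π * |u|) ≤ |Real.sin w| * |Real.sin u| := by
    apply mul_le_mul (le_trans hsinw (le_abs_self _)) hsinu (by positivity) (abs_nonneg _)
  have hcc : Real.cos y - Real.cos a = -2 * Real.sin w * Real.sin u := by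
    rw [Real.cos_sub_cos]
  rw [hcc, abs_mul, abs_mul]
  have habs2 : |(-2 : ℝ)| = 2 := by norm_num
  rw [habs2]
  have h20 : π^2 ≤ 20 * z₀ := by rw [hz₀]; nlinarith
  have hπpos : (0:ℝ) < π := Real.pi_pos
  have key : |y - a| / 5 ≤ 2 * ((2/π * z₀) * (2/π * |u|)) := by
    rw [hyu]
    rw [div_le_iff₀ (by norm_num : (0:ℝ) < 5)]
    have hexp : 2 * ((2/π * z₀) * (2/π * |u|)) * 5 = (40 * z₀ / π^2) * |u| := by
      field_simp; ring
    rw [show 2 * |u| = 2 * |u| * 1 by ring]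
    rw [hexp]
    have h2le : (2:ℝ) ≤ 40 * z₀ / π^2 := by
      rw [le_div_iff₀ (by positivity)]; nlinarith
    have := mul_le_mul_of_nonneg_right h2le (abs_nonneg u)
    linarith
  rw [mul_assoc]
  linarith [key, hAB]

lemma aux_case {α t u v : ℝ} (hα1 : 1/2 < α) (hα2 : α < 1) (ht : 0 < t)
    (hu : 0 ≤ u) (huv : u ≤ v) (htuv : t ≤ u + v) :
    u ^ (-α) * v ^ (-α)
      ≤ (t/2) ^ (-α) * (if u ≤ t then u ^ (-α) else 0) + (max u t) ^ (-(2*α)) := by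
  have hmaxnn : (0:ℝ) ≤ (max u t) ^ (-(2*α)) := Real.rpow_nonneg (le_trans hu (le_max_left _ _)) _
  by_cases hut : u ≤ t
  · rw [if_pos hut]
    have hv2 : t/2 ≤ v := by linarith
    have hvb : v ^ (-α) ≤ (t/2) ^ (-α) :=
      Real.rpow_le_rpow_of_nonpos (by linarith) hv2 (by linarith)
    have : u ^ (-α) * v ^ (-α) ≤ u ^ (-α) * (t/2) ^ (-α) :=
      mul_le_mul_of_nonneg_left hvb (Real.rpow_nonneg hu _)
    nlinarith [this, hmaxnn]
  · rw [if_neg hut]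
    push_neg at hut
    have hupos : 0 < u := lt_trans ht hut
    have hvb : v ^ (-α) ≤ u ^ (-α) :=
      Real.rpow_le_rpow_of_nonpos hupos huv (by linarith)
    have h1 : u ^ (-α) * v ^ (-α) ≤ u ^ (-α) * u ^ (-α) :=
      mul_le_mul_of_nonneg_left hvb (Real.rpow_nonneg hu _)
    have h2 : u ^ (-α) * u ^ (-α) = u ^ (-(2*α)) := by
      rw [← Real.rpow_add hupos]; ring_nf
    have h3 : max u t = u := max_eq_left hut.le
    rw [h3]
    have hnn1 : (0:ℝ) ≤ (t/2) ^ (-α) := Real.rpow_nonneg (by linarith) _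
    nlinarith [h1, h2, hnn1]

lemma aux_F_bound {α t c b x : ℝ} (hα1 : 1/2 < α) (hα2 : α < 1) (ht : 0 < t)
    (htcb : t ≤ |x - c| + |x - b|) :
    |x - c| ^ (-α) * |x - b| ^ (-α) ≤
      (t/2) ^ (-α) * (Icc (c-t) (c+t)).indicator (fun y => |y - c| ^ (-α)) x
      + (t/2) ^ (-α) * (Icc (b-t) (b+t)).indicator (fun y => |y - b| ^ (-α)) x
      + (max |x - c| t) ^ (-(2*α)) + (max |x - b| t) ^ (-(2*α)) := by
  have ind : ∀ d : ℝ, (Icc (d-t) (d+t)).indicator (fun y => |y - d| ^ (-α)) x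
      = if |x - d| ≤ t then |x - d| ^ (-α) else 0 := by
    intro d
    rw [Set.indicator_apply]
    refine if_congr ?_ rfl rfl
    rw [mem_Icc, abs_sub_le_iff]
    constructor <;> (intro h; constructor <;> linarith [h.1, h.2])
  rw [ind c, ind b]
  have hnn1 : (0:ℝ) ≤ (t/2) ^ (-α) * (if |x - c| ≤ t then |x - c| ^ (-α) else 0) := by
    apply mul_nonneg (Real.rpow_nonneg (by linarith) _)
    split
    · exact Real.rpow_nonneg (abs_nonneg _) _
    · exact le_refl 0
  have hnn2 : (0:ℝ) ≤ (t/2) ^ (-α) * (if |x - b| ≤ t then |x - b| ^ (-α) else 0) := by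
    apply mul_nonneg (Real.rpow_nonneg (by linarith) _)
    split
    · exact Real.rpow_nonneg (abs_nonneg _) _
    · exact le_refl 0
  have hnn3 : (0:ℝ) ≤ (max |x - c| t) ^ (-(2*α)) :=
    Real.rpow_nonneg (le_trans (abs_nonneg _) (le_max_left _ _)) _
  have hnn4 : (0:ℝ) ≤ (max |x - b| t) ^ (-(2*α)) :=
    Real.rpow_nonneg (le_trans (abs_nonneg _) (le_max_left _ _)) _
  rcases le_total |x - c| |x - b| with hcmp | hcmp
  · have := aux_case hα1 hα2 ht (abs_nonneg (x - c)) hcmp htcb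
    linarith
  · have := aux_case hα1 hα2 ht (abs_nonneg (x - b)) hcmp (by linarith)
    rw [mul_comm] at this
    linarith

lemma aux_pointwise {α a θ x : ℝ} (hα1 : 1/2 < α) (hα2 : α < 1)
    (ha : a ∈ Set.Ioo (π/3) (2*π/3)) (hθ : θ ≠ 0) (hθ1 : |θ| ≤ 1/100)
    (hx : x ∈ Icc (a-1) (a+1)) :
    |(Real.cos x + (-Real.cos a)) * (Real.cos (x - θ) + (-Real.cos a))| ^ (-α) ≤
      25 * ((|θ|/2) ^ (-α) * (Icc (a-|θ|) (a+|θ|)).indicator (fun y => |y - a| ^ (-α)) x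
        + (|θ|/2) ^ (-α)
          * (Icc ((a+θ)-|θ|) ((a+θ)+|θ|)).indicator (fun y => |y - (a+θ)| ^ (-α)) x
        + (max |x - a| |θ|) ^ (-(2*α)) + (max |x - (a+θ)| |θ|) ^ (-(2*α))) := by
  set b := a + θ with hb
  set t := |θ| with htdef
  have ht : 0 < t := abs_pos.2 hθ
  rw [mem_Icc] at hx
  have hxa : |x - a| ≤ 1 := abs_le.2 ⟨by linarith [hx.1], by linarith [hx.2]⟩
  have hxb1 : |x - θ - a| ≤ 101/100 := by
    have h0 : x - θ - a = (x - a) + (-θ) := by ring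
    rw [h0]
    calc |(x - a) + (-θ)| ≤ |x - a| + |(-θ)| := abs_add_le _ _
      _ ≤ 1 + 1/100 := by rw [abs_neg]; exact add_le_add hxa hθ1
      _ = 101/100 := by norm_num
  have hxbeq : x - θ - a = x - b := by rw [hb]; ring
  have h1 : |x - a| / 5 ≤ |Real.cos x - Real.cos a| :=
    aux_cos_lower ha (by linarith)
  have h2 : |x - b| / 5 ≤ |Real.cos (x - θ) - Real.cos a| := by
    have := aux_cos_lower ha hxb1
    rwa [hxbeq] at this
  have htcb : t ≤ |x - a| + |x - b| := by
    have h0 : θ = (x - a) - (x - b) := by rw [hb]; ring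
    calc t = |(x - a) - (x - b)| := by rw [htdef, ← h0]
      _ ≤ |x - a| + |x - b| := abs_sub _ _
  have hF := aux_F_bound (t := t) (c := a) (b := b) (x := x) hα1 hα2 ht htcb
  set S := (t/2) ^ (-α) * (Icc (a-t) (a+t)).indicator (fun y => |y - a| ^ (-α)) x
      + (t/2) ^ (-α) * (Icc (b-t) (b+t)).indicator (fun y => |y - b| ^ (-α)) x
      + (max |x - a| t) ^ (-(2*α)) + (max |x - b| t) ^ (-(2*α)) with hS
  have hFnn : (0:ℝ) ≤ |x - a| ^ (-α) * |x - b| ^ (-α) :=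
    mul_nonneg (Real.rpow_nonneg (abs_nonneg _) _) (Real.rpow_nonneg (abs_nonneg _) _)
  have hSnn : (0:ℝ) ≤ S := le_trans hFnn hF
  simp only [← sub_eq_add_neg]
  by_cases hz : |x - a| * |x - b| = 0
  · have hprod : (Real.cos x - Real.cos a) * (Real.cos (x - θ) - Real.cos a) = 0 := by
      rcases mul_eq_zero.1 hz with h | h
      · have : x = a := by have := abs_eq_zero.1 h; linarith
        rw [this]; simp
      · have hxb : x = b := by have := abs_eq_zero.1 h; linarith
        have : x - θ = a := by rw [hxb, hb]; ring
        rw [this]; simp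
    rw [hprod, abs_zero, Real.zero_rpow (by intro h; rw [neg_eq_zero] at h; linarith)]
    positivity
  · have hpos : 0 < |x - a| * |x - b| / 25 := by
      rcases (mul_nonneg (abs_nonneg (x - a)) (abs_nonneg (x - b))).lt_or_eq with h | h
      · linarith
      · exact absurd h.symm hz
    have habs : |x - a| * |x - b| / 25
        ≤ |(Real.cos x - Real.cos a) * (Real.cos (x - θ) - Real.cos a)| := by
      rw [abs_mul]
      have := mul_le_mul h1 h2 (by positivity) (abs_nonneg _)
      calc |x - a| * |x - b| / 25 = (|x - a|/5) * (|x - b|/5) := by ring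
        _ ≤ _ := this
    have h4 : |(Real.cos x - Real.cos a) * (Real.cos (x - θ) - Real.cos a)| ^ (-α)
        ≤ (|x - a| * |x - b| / 25) ^ (-α) :=
      Real.rpow_le_rpow_of_nonpos hpos habs (by linarith)
    have h5 : (|x - a| * |x - b| / 25) ^ (-α)
        = (|x - a| ^ (-α) * |x - b| ^ (-α)) * (25:ℝ) ^ α := by
      rw [Real.div_rpow (mul_nonneg (abs_nonneg _) (abs_nonneg _)) (by norm_num) _,
        Real.mul_rpow (abs_nonneg _) (abs_nonneg _),
        Real.rpow_neg (by norm_num : (0:ℝ) ≤ 25), div_eq_mul_inv, inv_inv]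
    have h6 : (25:ℝ) ^ α ≤ 25 := by
      calc (25:ℝ) ^ α ≤ (25:ℝ) ^ (1:ℝ) :=
            Real.rpow_le_rpow_of_exponent_le (by norm_num) hα2.le
        _ = 25 := Real.rpow_one _
    have h7 : (|x - a| ^ (-α) * |x - b| ^ (-α)) * (25:ℝ) ^ α
        ≤ (|x - a| ^ (-α) * |x - b| ^ (-α)) * 25 :=
      mul_le_mul_of_nonneg_left h6 hFnn
    have h8 : (|x - a| ^ (-α) * |x - b| ^ (-α)) * 25 ≤ 25 * S := by
      nlinarith [hF]
    calc |(Real.cos x - Real.cos a) * (Real.cos (x - θ) - Real.cos a)| ^ (-α)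
        ≤ (|x - a| * |x - b| / 25) ^ (-α) := h4
      _ = (|x - a| ^ (-α) * |x - b| ^ (-α)) * (25:ℝ) ^ α := h5
      _ ≤ (|x - a| ^ (-α) * |x - b| ^ (-α)) * 25 := h7
      _ ≤ 25 * S := h8

lemma aux_ind_integrable {α t : ℝ} (hα2 : α < 1) (ht : 0 < t) (c : ℝ) :
    Integrable ((Icc (c-t) (c+t)).indicator (fun y => |y - c| ^ (-α))) volume := by
  have h : IntegrableOn (fun y => |y - c| ^ (-α)) (Icc (c-t) (c+t)) volume := by
    rw [← intervalIntegrable_iff_integrableOn_Icc_of_le (by linarith)]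
    exact aux_abs_rpow_ii (by linarith) c _ _
  exact h.integrable_indicator measurableSet_Icc

lemma aux_ind_integral_le {α t : ℝ} (hα2 : α < 1) (ht : 0 < t) (c : ℝ) (s : Set ℝ) :
    ∫ x in s, (Icc (c-t) (c+t)).indicator (fun y => |y - c| ^ (-α)) x
      ≤ 2 * (t ^ (-α + 1) / (-α + 1)) := by
  have hint := aux_ind_integrable hα2 ht c
  have hnn : 0 ≤ᵐ[volume] (Icc (c-t) (c+t)).indicator (fun y => |y - c| ^ (-α)) :=
    Filter.Eventually.of_forall
      (Set.indicator_nonneg (fun y _ => Real.rpow_nonneg (abs_nonneg _) _))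
  calc ∫ x in s, (Icc (c-t) (c+t)).indicator (fun y => |y - c| ^ (-α)) x
      ≤ ∫ x, (Icc (c-t) (c+t)).indicator (fun y => |y - c| ^ (-α)) x :=
        setIntegral_le_integral hint hnn
    _ = ∫ x in Icc (c-t) (c+t), |x - c| ^ (-α) := integral_indicator measurableSet_Icc
    _ = 2 * (t ^ (-α + 1) / (-α + 1)) := aux_abs_rpow_integral (by linarith) ht.le c

theorem stmt_13 (α s : ℝ) (hα : α ∈ Set.Ioo (1 / 2 : ℝ) 1) (hs : 0 < s) :
    ∃ C > 0, ∃ θ₀ > 0, ∀ a ∈ Set.Ioo (π / 3) (2 * π / 3), s ≤ Real.sin a →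
      ∀ θ : ℝ, θ ≠ 0 → |θ| ≤ θ₀ →
        |(a + θ) - a| = |θ| ∧
        ∫ x in Set.Icc (a - 1) (a + 1),
            |(Real.cos x + (-Real.cos a)) * (Real.cos (x - θ) + (-Real.cos a))| ^ (-α)
          ≤ C * |θ| ^ (-(2 * α - 1)) := by
  obtain ⟨hα1, hα2⟩ := hα
  have h1α : (0:ℝ) < 1 - α := by linarith
  have h2α : (0:ℝ) < 2*α - 1 := by linarith
  refine ⟨25 * (8/(1-α) + 4 + 4/(2*α-1)), by positivity, 1/100, by norm_num, ?_⟩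
  intro a ha hsa θ hθ hθ1
  refine ⟨by rw [add_sub_cancel_left], ?_⟩
  have ht : 0 < |θ| := abs_pos.2 hθ
  set t := |θ| with htdef
  set b := a + θ with hb
  set I1 : ℝ → ℝ := (Icc (a-t) (a+t)).indicator (fun y => |y - a| ^ (-α)) with hI1def
  set I2 : ℝ → ℝ := (Icc (b-t) (b+t)).indicator (fun y => |y - b| ^ (-α)) with hI2def
  set M1 : ℝ → ℝ := fun x => (max |x - a| t) ^ (-(2*α)) with hM1def
  set M2 : ℝ → ℝ := fun x => (max |x - b| t) ^ (-(2*α)) with hM2def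
  have hI1i : Integrable I1 (volume.restrict (Icc (a-1) (a+1))) :=
    (aux_ind_integrable hα2 ht a).restrict
  have hI2i : Integrable I2 (volume.restrict (Icc (a-1) (a+1))) :=
    (aux_ind_integrable hα2 ht b).restrict
  have hM1i : Integrable M1 (volume.restrict (Icc (a-1) (a+1))) :=
    (aux_max_cont ht a).integrableOn_Icc
  have hM2i : Integrable M2 (volume.restrict (Icc (a-1) (a+1))) :=
    (aux_max_cont ht b).integrableOn_Icc
  have hGi : Integrable
      (fun x => 25 * ((t/2) ^ (-α) * I1 x + (t/2) ^ (-α) * I2 x + M1 x + M2 x))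
      (volume.restrict (Icc (a-1) (a+1))) :=
    ((((hI1i.const_mul _).add (hI2i.const_mul _)).add hM1i).add hM2i).const_mul 25
  have step1 : (∫ x in Icc (a-1) (a+1),
        |(Real.cos x + (-Real.cos a)) * (Real.cos (x - θ) + (-Real.cos a))| ^ (-α))
      ≤ ∫ x in Icc (a-1) (a+1),
        25 * ((t/2) ^ (-α) * I1 x + (t/2) ^ (-α) * I2 x + M1 x + M2 x) := by
    refine integral_mono_of_nonneg
      (Filter.Eventually.of_forall (fun x => Real.rpow_nonneg (abs_nonneg _) _)) hGi ?_
    refine (ae_restrict_iff' measurableSet_Icc).2 (Filter.Eventually.of_forall ?_)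
    intro x hx
    exact aux_pointwise hα1 hα2 ha hθ hθ1 hx
  have split : (∫ x in Icc (a-1) (a+1),
        25 * ((t/2) ^ (-α) * I1 x + (t/2) ^ (-α) * I2 x + M1 x + M2 x))
      = 25 * ((t/2) ^ (-α) * (∫ x in Icc (a-1) (a+1), I1 x)
          + (t/2) ^ (-α) * (∫ x in Icc (a-1) (a+1), I2 x)
          + (∫ x in Icc (a-1) (a+1), M1 x) + (∫ x in Icc (a-1) (a+1), M2 x)) := by
    rw [integral_const_mul]
    congr 1
    have e1 : (∫ x in Icc (a-1) (a+1),
          ((t/2) ^ (-α) * I1 x + (t/2) ^ (-α) * I2 x + M1 x + M2 x))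
        = (∫ x in Icc (a-1) (a+1), ((t/2) ^ (-α) * I1 x + (t/2) ^ (-α) * I2 x + M1 x))
          + ∫ x in Icc (a-1) (a+1), M2 x :=
      integral_add (((hI1i.const_mul _).add (hI2i.const_mul _)).add hM1i) hM2i
    have e2 : (∫ x in Icc (a-1) (a+1), ((t/2) ^ (-α) * I1 x + (t/2) ^ (-α) * I2 x + M1 x))
        = (∫ x in Icc (a-1) (a+1), ((t/2) ^ (-α) * I1 x + (t/2) ^ (-α) * I2 x))
          + ∫ x in Icc (a-1) (a+1), M1 x :=
      integral_add ((hI1i.const_mul _).add (hI2i.const_mul _)) hM1i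
    have e3 : (∫ x in Icc (a-1) (a+1), ((t/2) ^ (-α) * I1 x + (t/2) ^ (-α) * I2 x))
        = (∫ x in Icc (a-1) (a+1), (t/2) ^ (-α) * I1 x)
          + ∫ x in Icc (a-1) (a+1), (t/2) ^ (-α) * I2 x :=
      integral_add (hI1i.const_mul _) (hI2i.const_mul _)
    rw [e1, e2, e3, integral_const_mul, integral_const_mul]
  -- bounds for each integral
  have hB1 : (∫ x in Icc (a-1) (a+1), I1 x) ≤ 2 * (t ^ (-α + 1) / (-α + 1)) :=
    aux_ind_integral_le hα2 ht a _
  have hB2 : (∫ x in Icc (a-1) (a+1), I2 x) ≤ 2 * (t ^ (-α + 1) / (-α + 1)) :=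
    aux_ind_integral_le hα2 ht b _
  have hB3 : (∫ x in Icc (a-1) (a+1), M1 x) ≤ (2 + 2/(2*α-1)) * t ^ (1 - 2*α) :=
    aux_max_integral ht (by linarith) hα1 hα2
  have hB4 : (∫ x in Icc (a-1) (a+1), M2 x) ≤ (2 + 2/(2*α-1)) * t ^ (1 - 2*α) := by
    have hθab := abs_le.1 hθ1
    have hsub : Icc (a-1) (a+1) ⊆ Icc (b-2) (b+2) := by
      intro x hx
      rw [mem_Icc] at hx ⊢
      constructor <;> [skip; skip] <;> rw [hb] <;>
        [linarith [hθab.2, hx.1]; linarith [hθab.1, hx.2]]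
    have hbig : IntegrableOn M2 (Icc (b-2) (b+2)) volume :=
      (aux_max_cont ht b).integrableOn_Icc
    have hmono : (∫ x in Icc (a-1) (a+1), M2 x) ≤ ∫ x in Icc (b-2) (b+2), M2 x := by
      refine setIntegral_mono_set hbig ?_ (HasSubset.Subset.eventuallyLE hsub)
      exact Filter.Eventually.of_forall
        (fun x => Real.rpow_nonneg (le_trans (abs_nonneg _) (le_max_left _ _)) _)
    exact hmono.trans (aux_max_integral ht (by linarith) hα1 hα2)
  -- nonnegativity of the indicator integrals
  have hInn : ∀ c : ℝ, (0:ℝ) ≤ ∫ x in Icc (a-1) (a+1),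
      (Icc (c-t) (c+t)).indicator (fun y => |y - c| ^ (-α)) x :=
    fun c => setIntegral_nonneg measurableSet_Icc
      (fun x _ => Set.indicator_nonneg (fun y _ => Real.rpow_nonneg (abs_nonneg _) _) x)
  -- rpow algebra
  have hhalf : (t/2) ^ (-α) ≤ 2 * t ^ (-α) := by
    have e : (t/2) ^ (-α) = t ^ (-α) * (2:ℝ) ^ α := by
      rw [Real.div_rpow ht.le (by norm_num), Real.rpow_neg (by norm_num : (0:ℝ) ≤ 2),
        div_eq_mul_inv, inv_inv]
    have h2a : (2:ℝ) ^ α ≤ 2 := by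
      calc (2:ℝ) ^ α ≤ (2:ℝ) ^ (1:ℝ) := Real.rpow_le_rpow_of_exponent_le one_le_two hα2.le
        _ = 2 := Real.rpow_one _
    rw [e]
    have := mul_le_mul_of_nonneg_left h2a (Real.rpow_nonneg ht.le (-α))
    linarith
  have hkey : t ^ (-α) * t ^ (-α + 1) = t ^ (1 - 2*α) := by
    rw [← Real.rpow_add ht]; congr 1; ring
  have hterm : ∀ c : ℝ, (∫ x in Icc (a-1) (a+1),
        (Icc (c-t) (c+t)).indicator (fun y => |y - c| ^ (-α)) x)
      ≤ 2 * (t ^ (-α + 1) / (-α + 1)) →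
      (t/2) ^ (-α) * (∫ x in Icc (a-1) (a+1),
        (Icc (c-t) (c+t)).indicator (fun y => |y - c| ^ (-α)) x)
      ≤ 4 * t ^ (1 - 2*α) / (1 - α) := by
    intro c hc
    have step : (t/2) ^ (-α) * (∫ x in Icc (a-1) (a+1),
          (Icc (c-t) (c+t)).indicator (fun y => |y - c| ^ (-α)) x)
        ≤ (2 * t ^ (-α)) * (2 * (t ^ (-α + 1) / (-α + 1))) := by
      apply mul_le_mul hhalf hc (hInn c)
      positivity
    have e2 : (2 * t ^ (-α)) * (2 * (t ^ (-α + 1) / (-α + 1)))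
        = 4 * (t ^ (-α) * t ^ (-α + 1)) / (-α + 1) := by ring
    rw [e2, hkey, show -α + 1 = 1 - α by ring] at step
    exact step
  have hT1 := hterm a hB1
  have hT2 := hterm b hB2
  have hP : (0:ℝ) < t ^ (1 - 2*α) := Real.rpow_pos_of_pos ht _
  calc (∫ x in Icc (a-1) (a+1),
        |(Real.cos x + (-Real.cos a)) * (Real.cos (x - θ) + (-Real.cos a))| ^ (-α))
      ≤ 25 * ((t/2) ^ (-α) * (∫ x in Icc (a-1) (a+1), I1 x)
          + (t/2) ^ (-α) * (∫ x in Icc (a-1) (a+1), I2 x)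
          + (∫ x in Icc (a-1) (a+1), M1 x) + (∫ x in Icc (a-1) (a+1), M2 x)) :=
        step1.trans_eq split
    _ ≤ 25 * (4 * t ^ (1-2*α)/(1-α) + 4 * t ^ (1-2*α)/(1-α)
          + (2 + 2/(2*α-1)) * t ^ (1-2*α) + (2 + 2/(2*α-1)) * t ^ (1-2*α)) := by
        have := hT1; have := hT2
        linarith [hT1, hT2, hB3, hB4]
    _ = 25 * (8/(1-α) + 4 + 4/(2*α-1)) * t ^ (-(2*α - 1)) := by
        rw [show -(2*α - 1) = 1 - 2*α by ring]
        field_simp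
        ring
end

section
/- Let h(x) = λ cos x + 2x with λ large, and let ℓ be an integer with |λ − 2πℓ| ≥ cλ for some fixed c ∈ (0,1). Then on the set I_ℓ = {x ∈ [−π/2, π/2] : (2ℓ−1)π ≤ h(x) ≤ (2ℓ+1)π}, every x satisfies |x| ≥ c₁ and |h'(x)| ≥ c₁ λ for a constant c₁ > 0 depending only on c (for λ sufficiently large). -/
open Real

theorem stmt_14 (c : ℝ) (hc : c ∈ Set.Ioo (0 : ℝ) 1) :
    ∃ c₁ > 0, ∃ lam₀ : ℝ, ∀ lam ≥ lam₀, ∀ ℓ : ℤ, c * lam ≤ |lam - 2 * π * ℓ| →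
      ∀ x ∈ Set.Icc (-(π / 2)) (π / 2),
        (2 * ℓ - 1) * π ≤ lam * Real.cos x + 2 * x →
        lam * Real.cos x + 2 * x ≤ (2 * ℓ + 1) * π →
        c₁ ≤ |x| ∧ c₁ * lam ≤ |(-(lam * Real.sin x) + 2)| := by
  obtain ⟨hc0, hc1⟩ := hc
  have hc2 : (0:ℝ) < c/2 := by linarith
  have hs : 0 < Real.sqrt (c/2) := Real.sqrt_pos.mpr hc2
  refine ⟨Real.sqrt (c/2) / 2, by positivity, 8*π/c + 8/c, ?_⟩
  intro lam hlam ℓ hℓ x hx h1 h2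
  have hπ : 0 < π := Real.pi_pos
  have hlam0 : 0 < lam := lt_of_lt_of_le (by positivity) hlam
  have hcos1 : Real.cos x ≤ 1 := Real.cos_le_one x
  have hcosnn : 0 ≤ Real.cos x := Real.cos_nonneg_of_mem_Icc ⟨by linarith [hx.1], hx.2⟩
  have h8 : 8*π + 8 ≤ c*lam := by
    have h := mul_le_mul_of_nonneg_left hlam hc0.le
    have e : c * (8*π/c + 8/c) = 8*π + 8 := by field_simp
    linarith [e ▸ h]
  -- key inequality
  have key : c * lam ≤ lam * (1 - Real.cos x) + 2*π := by
    have h3 : |lam - 2*π*ℓ| ≤ lam*(1 - Real.cos x) + 2*π := by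
      rcases abs_cases (lam - 2*π*(ℓ:ℝ)) with ⟨he, _⟩ | ⟨he, _⟩ <;> rw [he] <;>
        nlinarith [hx.1, hx.2]
    linarith [le_trans hℓ h3]
  have hcc : c/2 ≤ 1 - Real.cos x := by
    by_contra hcon
    push_neg at hcon
    have := mul_lt_mul_of_pos_left hcon hlam0
    nlinarith
  have hsin2 : c/2 ≤ Real.sin x ^ 2 := by
    nlinarith [Real.sin_sq_add_cos_sq x]
  have hsabs : Real.sqrt (c/2) ≤ |Real.sin x| := by
    have := Real.sqrt_le_sqrt hsin2
    rwa [Real.sqrt_sq_eq_abs] at this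
  have hxs : Real.sqrt (c/2) ≤ |x| := le_trans hsabs (Real.abs_sin_le_abs)
  have hcs : c/2 ≤ Real.sqrt (c/2) := by
    have h1 : Real.sqrt (c/2) ≤ 1 := by
      rw [show (1:ℝ) = Real.sqrt 1 by simp]
      exact Real.sqrt_le_sqrt (by linarith)
    nlinarith [Real.sq_sqrt hc2.le]
  have h4 : 4 ≤ lam * Real.sqrt (c/2) := by
    nlinarith
  have hls : lam * Real.sqrt (c/2) ≤ lam * |Real.sin x| :=
    mul_le_mul_of_nonneg_left hsabs hlam0.le
  constructor
  · linarith
  · have habs : lam * |Real.sin x| - 2 ≤ |(-(lam * Real.sin x)) + 2| := by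
      have h := abs_sub_abs_le_abs_sub (-(lam * Real.sin x)) (-2 : ℝ)
      rw [sub_neg_eq_add, abs_neg, abs_neg, abs_mul, abs_of_pos hlam0] at h
      simpa using h
    linarith
end
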